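/- arXiv:2211.15602 — 3 statements merged into one kernel-verified Lean document; each statement's English description precedes it below -/
import Mathlib

section
/- For all integers n ≥ 1 and k ≥ 2, every digraph G with n vertices and every vertex of outdegree exactly k satisfies N_2(G) ≤ n²·k·((k+1)!)^((n−1)/(k+1)), where N_2(G) is the number of path-cycle subgraphs of the skeleton of G. -/
open scoped Classical
open Finset

/-- Number of directed cycles in a finite directed multigraph on `Fin n`
specified by the edge-multiplicity function `G`: self-loops are cycles of
length 1, cycles of length `≥ 2` correspond to cyclic permutations, parallel
edges give distinct cycles, and cycles are counted up to cyclic rotation. -/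
noncomputable def cycleCount (n : ℕ) (G : Fin n → Fin n → ℕ) : ℕ :=
  (∑ v, G v v) +
  ∑ σ : Equiv.Perm (Fin n), if σ.IsCycle then ∏ v ∈ σ.support, G v (σ v) else 0

/-- Number of path-cycle subgraphs of a finite directed multigraph with
multiplicity function `G`: a path-cycle subgraph is given by a nonempty
vertex set `s` together with a successor map `f` on `s` (extended by the
identity off `s`) whose functional digraph on `s` is weakly connected and
has at most one source (vertex of indegree zero); parallel edges give
distinct path-cycles. -/
noncomputable def pathCycleCount {V : Type*} [Fintype V] [DecidableEq V]
    (G : V → V → ℕ) : ℕ :=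
  ∑ s : Finset V, ∑ f : V → V,
    if s.Nonempty ∧ (∀ v, v ∉ s → f v = v) ∧ (∀ v ∈ s, f v ∈ s) ∧
        (∀ u ∈ s, ∀ v ∈ s,
          Relation.ReflTransGen (fun a b => (a ∈ s ∧ f a = b) ∨ (b ∈ s ∧ f b = a)) u v) ∧
        (s.filter fun v => ∀ u ∈ s, f u ≠ v).card ≤ 1
    then ∏ v ∈ s, G v (f v) else 0

/-- `α(k) = (k - 1 + √((k-1)² + 4)) / 2`. -/
noncomputable def alphaK (k : ℕ) : ℝ :=
  ((k : ℝ) - 1 + Real.sqrt (((k : ℝ) - 1) ^ 2 + 4)) / 2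

/-- Multiplicity function of the digraph `G_{n,k}`: on vertices `Fin n`,
edges `(i, i+1 mod n)` have multiplicity `k - 1` and edges `(i, i+2 mod n)`
have multiplicity `1`. -/
def GnkMult (n k : ℕ) : Fin n → Fin n → ℕ := fun i j =>
  if (j.val + n - i.val) % n = 1 then k - 1
  else if (j.val + n - i.val) % n = 2 then 1
  else 0

/-- Multiplicity function of the digraph `G'_{n,k}`: on vertices `Fin n`,
edges `(i, i+1 mod n)` have multiplicity `1` and edges `(i, i+2 mod n)`
have multiplicity `k - 1`. -/
def Gnk'Mult (n k : ℕ) : Fin n → Fin n → ℕ := fun i j =>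
  if (j.val + n - i.val) % n = 1 then 1
  else if (j.val + n - i.val) % n = 2 then k - 1
  else 0

/-- Edge relation of the simple digraph `G_m`: `(i, j)` is an edge whenever
`j - i ≡ 1 (mod m)` or `j - i ≡ 2 (mod m)`. -/
def GmRel (m : ℕ) : Fin m → Fin m → Prop := fun i j =>
  (j.val + m - i.val) % m = 1 ∨ (j.val + m - i.val) % m = 2

/-- The sequence `S_m` with `S_0 = 1`, `S_1 = k - 1`,
`S_m = (k-1) S_{m-1} + S_{m-2}`. -/
def Sseq (k : ℕ) : ℕ → ℕ
  | 0 => 1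
  | 1 => k - 1
  | (m + 2) => (k - 1) * Sseq k (m + 1) + Sseq k m

/-- `F_k(n)`: the maximum number of directed cycles over all digraphs on `n`
vertices with every outdegree exactly `k` in which every multi-edge between
distinct vertices has multiplicity at most `k - 1`. -/
noncomputable def Fk (k n : ℕ) : ℕ :=
  sSup {c : ℕ | ∃ G : Fin n → Fin n → ℕ,
    (∀ v, (∑ u, G v u) = k) ∧ (∀ u v : Fin n, u ≠ v → G u v ≤ k - 1) ∧
    c = cycleCount n G}

/-- Weak connectivity (same connected component) in a directed multigraph. -/
def MConn {n : ℕ} (G : Fin n → Fin n → ℕ) : Fin n → Fin n → Prop :=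
  Relation.ReflTransGen (fun a b => 0 < G a b ∨ 0 < G b a)

/-- A deterministic Markov decision problem with state space `S`, action
space `A` (all actions available at every state), deterministic transition
function `T`, reward function `R` and discount factor `gamma ∈ [0, 1)`. -/
structure DMDP (S A : Type*) where
  T : S → A → S
  R : S → A → ℝ
  gamma : ℝ
  gamma_nonneg : 0 ≤ gamma
  gamma_lt_one : gamma < 1

namespace DMDP

variable {S A : Type*}

/-- The trajectory of states obtained by following policy `π` from `s`. -/
def traj (M : DMDP S A) (π : S → A) (s : S) (t : ℕ) : S :=
  (fun x => M.T x (π x))^[t] s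

/-- The value function `V^π(s) = Σ_t γ^t R(s_t, π(s_t))`. -/
noncomputable def V (M : DMDP S A) (π : S → A) (s : S) : ℝ :=
  ∑' t : ℕ, M.gamma ^ t * M.R (M.traj π s t) (π (M.traj π s t))

/-- The action value function `Q^π(s, a) = R(s, a) + γ V^π(T(s, a))`. -/
noncomputable def Q (M : DMDP S A) (π : S → A) (s : S) (a : A) : ℝ :=
  M.R s a + M.gamma * M.V π (M.T s a)

/-- `π ≺ π'`: pointwise `V^π ≤ V^{π'}` with strict inequality somewhere. -/
def PLt (M : DMDP S A) (π π' : S → A) : Prop :=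
  (∀ s, M.V π s ≤ M.V π' s) ∧ ∃ s, M.V π s < M.V π' s

/-- `π'` is obtained from `π` by policy improvement with arbitrary action
selection. -/
def ImpStep (M : DMDP S A) (π π' : S → A) : Prop :=
  π' ≠ π ∧ ∀ s, π' s ≠ π s → M.V π s < M.Q π s (π' s)

/-- `π'` is obtained from `π` by policy improvement with max-gain action
selection. -/
def MaxGainStep (M : DMDP S A) (π π' : S → A) : Prop :=
  π' ≠ π ∧ ∀ s, π' s ≠ π s →
    M.V π s < M.Q π s (π' s) ∧
    ∀ a, M.V π s < M.Q π s a → M.Q π s a ≤ M.Q π s (π' s)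

/-- The first time step at which a previously visited state recurs on the
trajectory of `π` from `s`. -/
noncomputable def pcLen (M : DMDP S A) (π : S → A) (s : S) : ℕ :=
  sInf {t : ℕ | ∃ t' < t, M.traj π s t' = M.traj π s t}

/-- The path-cycle `P^π_s`: the sequence of state–action–state triples
`(s_t, π(s_t), s_{t+1})` for `t` up to (but excluding) the first recurrence
of a previously visited state. -/
noncomputable def pathCycle (M : DMDP S A) (π : S → A) (s : S) : List (S × A × S) :=
  (List.range (M.pcLen π s)).map fun t =>
    (M.traj π s t, π (M.traj π s t), M.traj π s (t + 1))

/-- The multiplicity function of the DMDP digraph `G_M`: one edge from `s`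
to `T(s, a)` for every action `a`. -/
noncomputable def digraph (M : DMDP S A) [Fintype A] : S → S → ℕ :=
  fun s s' => (Finset.univ.filter fun a => M.T s a = s').card

/-- A state is non-branching if all actions lead to the same next state. -/
def NonBranching (M : DMDP S A) (s : S) : Prop := ∃ s', ∀ a, M.T s a = s'

/-- The relation `∼` on path-cycles: same sequence of states, and wherever
the actions differ the state is non-branching. -/
def PCSim (M : DMDP S A) (P₁ P₂ : List (S × A × S)) : Prop :=
  P₁.length = P₂.length ∧
  ∀ (t : ℕ) (h₁ : t < P₁.length) (h₂ : t < P₂.length),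
    (P₁.get ⟨t, h₁⟩).1 = (P₂.get ⟨t, h₂⟩).1 ∧
    (P₁.get ⟨t, h₁⟩).2.2 = (P₂.get ⟨t, h₂⟩).2.2 ∧
    ((P₁.get ⟨t, h₁⟩).2.1 ≠ (P₂.get ⟨t, h₂⟩).2.1 → M.NonBranching (P₁.get ⟨t, h₁⟩).1)

/-- The relation `≈` on path-cycles: they differ only in equivalent edges,
i.e. have the same sequences of source and target states. -/
def PCApprox (_M : DMDP S A) (P₁ P₂ : List (S × A × S)) : Prop :=
  P₁.length = P₂.length ∧
  ∀ (t : ℕ) (h₁ : t < P₁.length) (h₂ : t < P₂.length),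
    (P₁.get ⟨t, h₁⟩).1 = (P₂.get ⟨t, h₂⟩).1 ∧
    (P₁.get ⟨t, h₁⟩).2.2 = (P₂.get ⟨t, h₂⟩).2.2

end DMDP

namespace PCaux

variable {n : ℕ}

/-- rank count: number of elements of `T` whose `τ`-position is at least that of `v`. -/
noncomputable def rkC (T : Finset (Fin n)) (τ : Equiv.Perm (Fin n)) (v : Fin n) : ℕ :=
  (T.filter fun j => τ v ≤ τ j).card

lemma L1 (τ : Equiv.Perm (Fin n)) (T : Finset (Fin n)) :
    ∏ x ∈ T, rkC T τ x = T.card.factorial := by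
  induction T using Finset.strongInduction with
  | _ T ih =>
  rcases T.eq_empty_or_nonempty with rfl | hT
  · simp
  obtain ⟨x₀, hx₀, hmin⟩ := T.exists_min_image (fun x => τ x) hT
  have hx : ∀ x ∈ T.erase x₀, rkC T τ x = rkC (T.erase x₀) τ x := by
    intro x hxe
    have hxT := Finset.mem_of_mem_erase hxe
    have hne : x ≠ x₀ := Finset.ne_of_mem_erase hxe
    unfold rkC
    congr 1
    ext j
    simp only [Finset.mem_filter, Finset.mem_erase]
    constructor
    · rintro ⟨hj, hle⟩
      refine ⟨⟨?_, hj⟩, hle⟩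
      rintro rfl
      exact hne (τ.injective (le_antisymm hle (hmin x hxT)))
    · rintro ⟨⟨hj1, hj2⟩, hle⟩; exact ⟨hj2, hle⟩
  have hx₀c : rkC T τ x₀ = T.card := by
    unfold rkC
    rw [Finset.filter_true_of_mem (fun j hj => hmin j hj)]
  rw [← Finset.prod_erase_mul T _ hx₀, Finset.prod_congr rfl hx,
    ih (T.erase x₀) (Finset.erase_ssubset hx₀), hx₀c]
  have hcard : T.card = (T.erase x₀).card + 1 := by
    rw [Finset.card_erase_of_mem hx₀]
    have := Finset.card_pos.mpr hT
    omega
  rw [hcard, Nat.factorial_succ]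
  ring

/-- permutations supported inside `T` -/
noncomputable def Hperm (T : Finset (Fin n)) : Finset (Equiv.Perm (Fin n)) :=
  univ.filter fun g => ∀ y, y ∉ T → g y = y

lemma mem_Hperm {T : Finset (Fin n)} {g : Equiv.Perm (Fin n)} :
    g ∈ Hperm T ↔ ∀ y, y ∉ T → g y = y := by simp [Hperm]

lemma Hperm_maps {T : Finset (Fin n)} {g : Equiv.Perm (Fin n)} (hg : g ∈ Hperm T) (x : Fin n) :
    x ∈ T ↔ g x ∈ T := by
  rw [mem_Hperm] at hg
  constructor
  · intro hx
    by_contra h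
    have h2 := hg _ h
    have : g x = x := g.injective h2
    rw [this] at h; exact h hx
  · intro hx
    by_contra h
    rw [hg _ h] at hx; exact h hx

lemma card_Hperm (T : Finset (Fin n)) : (Hperm T).card = T.card.factorial := by
  have h1 : (Hperm T).card = Fintype.card {f : Equiv.Perm (Fin n) // ∀ a, ¬(a ∈ T) → f a = a} := by
    rw [Fintype.card_subtype]
    rfl
  rw [h1, ← Fintype.card_congr (Equiv.Perm.subtypeEquivSubtypePerm (· ∈ T)),
    Fintype.card_perm, Fintype.card_coe]

lemma swap_mem_fiber {T : Finset (Fin n)} {v x x' : Fin n} (hx : x ∈ T) (hx' : x' ∈ T)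
    {g : Equiv.Perm (Fin n)} (hg : g ∈ (Hperm T).filter fun g => g v = x) :
    Equiv.swap x x' * g ∈ (Hperm T).filter fun g => g v = x' := by
  simp only [Finset.mem_filter] at hg ⊢
  obtain ⟨hgH, hgv⟩ := hg
  rw [mem_Hperm] at hgH
  constructor
  · rw [mem_Hperm]
    intro y hy
    have h1 : g y = y := hgH y hy
    have h2 : y ≠ x := fun h => hy (h ▸ hx)
    have h3 : y ≠ x' := fun h => hy (h ▸ hx')
    simp [Equiv.Perm.mul_apply, h1, Equiv.swap_apply_of_ne_of_ne h2 h3]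
  · simp [Equiv.Perm.mul_apply, hgv]

lemma fiber_card_eq {T : Finset (Fin n)} {v x x' : Fin n} (hx : x ∈ T) (hx' : x' ∈ T) :
    ((Hperm T).filter fun g => g v = x).card = ((Hperm T).filter fun g => g v = x').card := by
  apply Finset.card_bij' (fun g _ => Equiv.swap x x' * g) (fun g _ => Equiv.swap x x' * g)
  · intro g hg; exact swap_mem_fiber hx hx' hg
  · intro g hg
    have h := swap_mem_fiber hx' hx hg
    rwa [Equiv.swap_comm x' x] at h
  · intro g _; rw [← mul_assoc, Equiv.swap_mul_self, one_mul]
  · intro g _; rw [← mul_assoc, Equiv.swap_mul_self, one_mul]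

lemma fiber_card_mul {T : Finset (Fin n)} {v : Fin n} (hv : v ∈ T) :
    ((Hperm T).filter fun g => g v = v).card * T.card = T.card.factorial := by
  have h1 : (Hperm T).card = ∑ x ∈ T, ((Hperm T).filter fun g => g v = x).card :=
    Finset.card_eq_sum_card_fiberwise (fun g hg => (Hperm_maps hg v).mp hv)
  have h2 : ∀ x ∈ T, ((Hperm T).filter fun g => g v = x).card
      = ((Hperm T).filter fun g => g v = v).card := fun x hx => fiber_card_eq hx hv
  rw [Finset.sum_congr rfl h2, Finset.sum_const, smul_eq_mul] at h1
  rw [mul_comm, ← h1, card_Hperm]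

lemma rkC_comp {T : Finset (Fin n)} {g : Equiv.Perm (Fin n)} (hg : g ∈ Hperm T)
    (τ : Equiv.Perm (Fin n)) (v : Fin n) : rkC T (τ * g) v = rkC T τ (g v) := by
  unfold rkC
  apply Finset.card_bij' (fun j _ => g j) (fun j _ => g⁻¹ j)
  · intro j hj
    rw [Finset.mem_filter] at hj ⊢
    simp only [Equiv.Perm.mul_apply] at hj ⊢
    exact ⟨(Hperm_maps hg j).mp hj.1, hj.2⟩
  · intro j hj
    rw [Finset.mem_filter] at hj ⊢
    simp only [Equiv.Perm.mul_apply] at hj ⊢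
    constructor
    · have := (Hperm_maps hg (g⁻¹ j)).mpr
      simp only [show g (g⁻¹ j) = j from g.apply_symm_apply j] at this
      exact this hj.1
    · have : g (g⁻¹ j) = j := g.apply_symm_apply j
      rw [this]
      exact hj.2
  · intro j _; exact g.symm_apply_apply j
  · intro j _; exact g.apply_symm_apply j

lemma B2 (T : Finset (Fin n)) (v : Fin n) (hv : v ∈ T) :
    ∏ τ : Equiv.Perm (Fin n), rkC T τ v
      = T.card.factorial ^ (n.factorial / T.card) := by
  classical
  set r := T.card with hr
  have hrpos : 0 < r := Finset.card_pos.mpr ⟨v, hv⟩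
  set c := ((Hperm T).filter fun g => g v = v).card with hc
  have hcr : c * r = r.factorial := fiber_card_mul hv
  set A := ∏ τ : Equiv.Perm (Fin n), rkC T τ v with hA
  have hstep : ∀ τ : Equiv.Perm (Fin n),
      ∏ g ∈ Hperm T, rkC T τ (g v) = r.factorial ^ c := by
    intro τ
    rw [← Finset.prod_fiberwise_of_maps_to (g := fun g : Equiv.Perm (Fin n) => g v)
      (t := T) (fun g hg => (Hperm_maps hg v).mp hv) (fun g => rkC T τ (g v))]
    have hinner : ∀ x ∈ T,
        ∏ g ∈ (Hperm T).filter (fun g => g v = x), rkC T τ (g v) = rkC T τ x ^ c := by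
      intro x hx
      rw [Finset.prod_congr rfl (fun g hg => by
        simp only [Finset.mem_filter] at hg
        rw [hg.2]), Finset.prod_const, fiber_card_eq hx hv]
    rw [Finset.prod_congr rfl hinner, Finset.prod_pow, L1]
  have hApow : A ^ r.factorial = r.factorial ^ (c * n.factorial) := by
    have h1 : A ^ r.factorial = ∏ _g ∈ Hperm T, A := by
      rw [Finset.prod_const, card_Hperm]
    have h2 : ∀ g ∈ Hperm T, A = ∏ τ : Equiv.Perm (Fin n), rkC T (τ * g) v := by
      intro g _
      rw [hA]
      exact (Equiv.prod_comp (Equiv.mulRight g) (fun τ => rkC T τ v)).symm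
    rw [h1, Finset.prod_congr rfl h2, Finset.prod_comm]
    have h3 : ∀ τ ∈ (univ : Finset (Equiv.Perm (Fin n))),
        ∏ g ∈ Hperm T, rkC T (τ * g) v = r.factorial ^ c := by
      intro τ _
      rw [Finset.prod_congr rfl (fun g hg => rkC_comp hg τ v)]
      exact hstep τ
    rw [Finset.prod_congr rfl h3, Finset.prod_const, Finset.card_univ, Fintype.card_perm,
      Fintype.card_fin, ← pow_mul, mul_comm c]
  have hrn : r ∣ n.factorial :=
    Nat.dvd_factorial hrpos (le_trans (Finset.card_le_univ T) (by simp))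
  have hBpow : (r.factorial ^ (n.factorial / r)) ^ r.factorial
      = r.factorial ^ (c * n.factorial) := by
    rw [← pow_mul]
    congr 1
    have h4 : n.factorial / r * r.factorial * r = c * n.factorial * r := by
      rw [mul_right_comm, Nat.div_mul_cancel hrn, mul_right_comm, hcr, mul_comm]
    exact Nat.eq_of_mul_eq_mul_right hrpos h4
  exact Nat.pow_left_injective (Nat.factorial_ne_zero r) (hApow.trans hBpow.symm)

/-- available-choice count for row `i` when processing rows in increasing `τ`-position -/
noncomputable def avail (S : Fin n → Finset (Fin n)) (σ τ : Equiv.Perm (Fin n)) (i : Fin n) : ℕ :=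
  (S i \ (univ.filter fun j => (τ j : ℕ) < (τ i : ℕ)).image σ).card

lemma claim1 (S : Fin n → Finset (Fin n)) (τ : Equiv.Perm (Fin n)) :
    ∀ (d : ℕ) (P : Finset (Equiv.Perm (Fin n))),
      (∀ σ ∈ P, ∀ i : Fin n, n - d ≤ (τ i : ℕ) → σ i ∈ S i) →
      (∀ σ ∈ P, ∀ σ' ∈ P, (∀ j : Fin n, n - d ≤ (τ j : ℕ) → σ j = σ' j) → σ = σ') →
      (∀ σ ∈ P, ∀ σ' ∈ P, ∀ j : Fin n, (τ j : ℕ) < n - d → σ j = σ' j) →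
      ∑ σ ∈ P, ∏ i ∈ univ.filter (fun i : Fin n => n - d ≤ (τ i : ℕ)),
        ((avail S σ τ i : ℝ))⁻¹ ≤ 1 := by
  intro d
  induction d with
  | zero =>
    intro P ha hb hc
    have hempty : (univ.filter (fun i : Fin n => n - 0 ≤ (τ i : ℕ))) = ∅ := by
      apply Finset.filter_false_of_mem
      intro i _
      have := (τ i).isLt
      omega
    rw [hempty]
    simp only [Finset.prod_empty]
    rw [Finset.sum_const, nsmul_eq_mul, mul_one]
    have : P.card ≤ 1 := by
      apply Finset.card_le_one.mpr
      intro σ hσ σ' hσ'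
      exact hb σ hσ σ' hσ' (fun j hj => by omega)
    exact_mod_cast this
  | succ d ih =>
    intro P ha hb hc
    by_cases hnd : n ≤ d
    · have he : n - (d+1) = n - d := by omega
      rw [he]
      rw [he] at ha hb hc
      exact ih P ha hb hc
    push_neg at hnd
    set t : ℕ := n - (d + 1) with ht
    have htn : t < n := by omega
    have htd : n - d = t + 1 := by omega
    rcases P.eq_empty_or_nonempty with rfl | ⟨σ₀, hσ₀⟩
    · simp
    set i₀ : Fin n := τ.symm ⟨t, htn⟩ with hi₀
    have hτi₀ : (τ i₀ : ℕ) = t := by rw [hi₀, Equiv.apply_symm_apply]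
    set U : Finset (Fin n) := (univ.filter fun j => (τ j : ℕ) < t).image σ₀ with hU
    have hUeq : ∀ σ ∈ P, (univ.filter fun j => (τ j : ℕ) < t).image σ = U := by
      intro σ hσ
      rw [hU]
      apply Finset.image_congr
      intro j hj
      simp only [Finset.mem_coe, Finset.mem_filter] at hj
      exact hc σ hσ σ₀ hσ₀ j hj.2
    have hsplit : (univ.filter (fun i : Fin n => t ≤ (τ i : ℕ)))
        = insert i₀ (univ.filter (fun i : Fin n => t + 1 ≤ (τ i : ℕ))) := by
      ext i
      simp only [Finset.mem_filter, Finset.mem_insert, Finset.mem_univ, true_and]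
      constructor
      · intro hi
        rcases Nat.eq_or_lt_of_le hi with heq | hlt
        · left
          rw [hi₀]
          apply_fun τ
          rw [Equiv.apply_symm_apply]
          exact Fin.ext heq.symm
        · right; omega
      · rintro (rfl | hi) <;> omega
    have hi₀notin : i₀ ∉ univ.filter (fun i : Fin n => t + 1 ≤ (τ i : ℕ)) := by
      simp only [Finset.mem_filter, Finset.mem_univ, true_and]
      omega
    rw [hsplit]
    have hprodsplit : ∀ σ ∈ P,
        ∏ i ∈ insert i₀ (univ.filter (fun i : Fin n => t + 1 ≤ (τ i : ℕ))),
          ((avail S σ τ i : ℝ))⁻¹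
        = ((((S i₀) \ U).card : ℝ))⁻¹ *
          ∏ i ∈ univ.filter (fun i : Fin n => t + 1 ≤ (τ i : ℕ)), ((avail S σ τ i : ℝ))⁻¹ := by
      intro σ hσ
      rw [Finset.prod_insert hi₀notin]
      congr 2
      unfold avail
      rw [hτi₀, hUeq σ hσ]
    rw [Finset.sum_congr rfl hprodsplit]
    have hmaps : ∀ σ ∈ P, σ i₀ ∈ (S i₀) \ U := by
      intro σ hσ
      rw [Finset.mem_sdiff]
      constructor
      · exact ha σ hσ i₀ (le_of_eq hτi₀.symm)
      · intro hmem
        rw [← hUeq σ hσ] at hmem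
        obtain ⟨j, hj, hje⟩ := Finset.mem_image.mp hmem
        simp only [Finset.mem_filter] at hj
        have hji : j = i₀ := σ.injective hje
        rw [hji] at hj
        omega
    rw [← Finset.sum_fiberwise_of_maps_to hmaps]
    have hinner : ∀ c ∈ (S i₀) \ U,
        ∑ σ ∈ P.filter (fun σ => σ i₀ = c),
          ((((S i₀) \ U).card : ℝ))⁻¹ *
            ∏ i ∈ univ.filter (fun i : Fin n => t + 1 ≤ (τ i : ℕ)), ((avail S σ τ i : ℝ))⁻¹
        ≤ ((((S i₀) \ U).card : ℝ))⁻¹ := by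
      intro c hcmem
      rw [← Finset.mul_sum]
      have hIH : ∑ σ ∈ P.filter (fun σ => σ i₀ = c),
          ∏ i ∈ univ.filter (fun i : Fin n => n - d ≤ (τ i : ℕ)), ((avail S σ τ i : ℝ))⁻¹ ≤ 1 := by
        apply ih
        · intro σ hσ i hi
          exact ha σ (Finset.mem_of_mem_filter σ hσ) i (by omega)
        · intro σ hσ σ' hσ' hagree
          simp only [Finset.mem_filter] at hσ hσ'
          apply hb σ hσ.1 σ' hσ'.1
          intro j hj
          rcases Nat.eq_or_lt_of_le hj with heq | hlt
          · have : j = i₀ := by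
              rw [hi₀]
              apply_fun τ
              rw [Equiv.apply_symm_apply]
              exact Fin.ext heq.symm
            rw [this, hσ.2, hσ'.2]
          · exact hagree j (by omega)
        · intro σ hσ σ' hσ' j hj
          simp only [Finset.mem_filter] at hσ hσ'
          rcases Nat.lt_or_ge (τ j : ℕ) t with hlt | hge
          · exact hc σ hσ.1 σ' hσ'.1 j hlt
          · have : j = i₀ := by
              rw [hi₀]
              apply_fun τ
              rw [Equiv.apply_symm_apply]
              apply Fin.ext
              show (τ j : ℕ) = t
              omega
            rw [this, hσ.2, hσ'.2]
      rw [htd] at hIH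
      calc ((((S i₀) \ U).card : ℝ))⁻¹ *
            ∑ σ ∈ P.filter (fun σ => σ i₀ = c),
              ∏ i ∈ univ.filter (fun i : Fin n => t + 1 ≤ (τ i : ℕ)), ((avail S σ τ i : ℝ))⁻¹
          ≤ ((((S i₀) \ U).card : ℝ))⁻¹ * 1 := by
            apply mul_le_mul_of_nonneg_left hIH
            positivity
        _ = ((((S i₀) \ U).card : ℝ))⁻¹ := mul_one _
    calc ∑ c ∈ (S i₀) \ U, ∑ σ ∈ P.filter (fun σ => σ i₀ = c),
          ((((S i₀) \ U).card : ℝ))⁻¹ *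
            ∏ i ∈ univ.filter (fun i : Fin n => t + 1 ≤ (τ i : ℕ)), ((avail S σ τ i : ℝ))⁻¹
        ≤ ∑ _c ∈ (S i₀) \ U, ((((S i₀) \ U).card : ℝ))⁻¹ := Finset.sum_le_sum hinner
      _ ≤ 1 := by
          rw [Finset.sum_const, nsmul_eq_mul]
          rcases Nat.eq_zero_or_pos ((S i₀) \ U).card with h0 | hpos
          · rw [h0]; norm_num
          · rw [mul_inv_cancel₀ (by positivity)]

lemma avail_eq_rkC (S : Fin n → Finset (Fin n)) (σ τ : Equiv.Perm (Fin n)) (i : Fin n) :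
    avail S σ τ i = rkC (univ.filter fun j => σ j ∈ S i) τ i := by
  unfold avail rkC
  symm
  apply Finset.card_bij' (fun j _ => σ j) (fun x _ => σ.symm x)
  · intro j hj
    simp only [Finset.mem_filter, Finset.mem_univ, true_and] at hj
    rw [Finset.mem_sdiff]
    refine ⟨hj.1, ?_⟩
    intro hmem
    obtain ⟨j', hj', hje⟩ := Finset.mem_image.mp hmem
    simp only [Finset.mem_filter, Finset.mem_univ, true_and] at hj'
    have : j' = j := σ.injective hje
    rw [this] at hj'
    omega
  · intro x hx
    rw [Finset.mem_sdiff] at hx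
    simp only [Finset.mem_filter, Finset.mem_univ, true_and, Equiv.apply_symm_apply]
    refine ⟨hx.1, ?_⟩
    by_contra hlt
    push_neg at hlt
    apply hx.2
    apply Finset.mem_image.mpr
    exact ⟨σ.symm x, by simp only [Finset.mem_filter, Finset.mem_univ, true_and]; omega,
      σ.apply_symm_apply x⟩
  · intro j _; exact σ.symm_apply_apply j
  · intro x _; exact σ.apply_symm_apply x

lemma card_T_eq (S : Fin n → Finset (Fin n)) (σ : Equiv.Perm (Fin n)) (i : Fin n) :
    (univ.filter fun j => σ j ∈ S i).card = (S i).card := by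
  apply Finset.card_bij' (fun j _ => σ j) (fun x _ => σ.symm x)
  · intro j hj
    simp only [Finset.mem_filter, Finset.mem_univ, true_and] at hj
    exact hj
  · intro x hx
    simp only [Finset.mem_filter, Finset.mem_univ, true_and, Equiv.apply_symm_apply]
    exact hx
  · intro j _; exact σ.symm_apply_apply j
  · intro x _; exact σ.apply_symm_apply x

theorem bregman (S : Fin n → Finset (Fin n)) :
    (((univ : Finset (Equiv.Perm (Fin n))).filter fun σ => ∀ i, σ i ∈ S i).card : ℝ)
      ≤ ∏ i, ((S i).card.factorial : ℝ) ^ (((S i).card : ℝ))⁻¹ := by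
  classical
  set SDR := (univ : Finset (Equiv.Perm (Fin n))).filter fun σ => ∀ i, σ i ∈ S i with hSDR
  have hRHS0 : (0:ℝ) ≤ ∏ i, ((S i).card.factorial : ℝ) ^ (((S i).card : ℝ))⁻¹ :=
    Finset.prod_nonneg fun i _ => Real.rpow_nonneg (by positivity) _
  rcases SDR.eq_empty_or_nonempty with hempty | ⟨σ₀, hσ₀mem⟩
  · rw [hempty]; simpa using hRHS0
  have hσ₀ : ∀ i, σ₀ i ∈ S i := (Finset.mem_filter.mp hσ₀mem).2
  have hrpos : ∀ i, 0 < (S i).card := fun i => Finset.card_pos.mpr ⟨σ₀ i, hσ₀ i⟩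
  have hprod_avail : ∀ σ ∈ SDR, ∀ i,
      ∏ τ : Equiv.Perm (Fin n), (avail S σ τ i)
        = (S i).card.factorial ^ (n.factorial / (S i).card) := by
    intro σ hσ i
    have hσS : ∀ j, σ j ∈ S j := (Finset.mem_filter.mp hσ).2
    have h1 : ∀ τ, avail S σ τ i = rkC (univ.filter fun j => σ j ∈ S i) τ i :=
      fun τ => avail_eq_rkC S σ τ i
    rw [Finset.prod_congr rfl (fun τ _ => h1 τ)]
    rw [B2 _ i (by simp only [Finset.mem_filter, Finset.mem_univ, true_and]; exact hσS i),
      card_T_eq]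
  set D : ℕ := ∏ i, (S i).card.factorial ^ (n.factorial / (S i).card) with hD
  have hDpos : 0 < D := Finset.prod_pos fun i _ => pow_pos (Nat.factorial_pos _) _
  set q : Equiv.Perm (Fin n) → Equiv.Perm (Fin n) → ℝ :=
    fun σ τ => ∏ i, ((avail S σ τ i : ℝ))⁻¹ with hq
  have hqnonneg : ∀ σ τ, 0 ≤ q σ τ := fun σ τ => Finset.prod_nonneg fun i _ => by positivity
  have hprodq : ∀ σ ∈ SDR, ∏ τ : Equiv.Perm (Fin n), q σ τ = ((D:ℝ))⁻¹ := by
    intro σ hσ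
    show (∏ τ : Equiv.Perm (Fin n), ∏ i, ((avail S σ τ i : ℝ))⁻¹) = ((D:ℝ))⁻¹
    rw [Finset.prod_comm]
    calc ∏ i, ∏ τ : Equiv.Perm (Fin n), ((avail S σ τ i : ℝ))⁻¹
        = ∏ i, (∏ τ : Equiv.Perm (Fin n), ((avail S σ τ i : ℝ)))⁻¹ :=
          Finset.prod_congr rfl fun i _ => Finset.prod_inv_distrib _
      _ = (∏ i, ∏ τ : Equiv.Perm (Fin n), ((avail S σ τ i : ℝ)))⁻¹ := Finset.prod_inv_distrib _
      _ = ((D:ℝ))⁻¹ := by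
          congr 1
          rw [hD]
          push_cast
          apply Finset.prod_congr rfl
          intro i _
          rw [← Nat.cast_prod, hprod_avail σ hσ i]
          push_cast
          ring
  have hnfac : (0:ℝ) < (n.factorial : ℝ) := by positivity
  have hamgm : ∀ σ ∈ SDR,
      (((D:ℝ))⁻¹) ^ (((n.factorial : ℝ))⁻¹)
        ≤ ∑ τ : Equiv.Perm (Fin n), ((n.factorial : ℝ))⁻¹ * q σ τ := by
    intro σ hσ
    have := Real.geom_mean_le_arith_mean_weighted univ (fun _ => ((n.factorial : ℝ))⁻¹) (q σ)
      (fun τ _ => by positivity)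
      (by rw [Finset.sum_const, Finset.card_univ, Fintype.card_perm, Fintype.card_fin,
            nsmul_eq_mul, mul_inv_cancel₀ (by positivity)])
      (fun τ _ => hqnonneg σ τ)
    rwa [Real.finset_prod_rpow univ (q σ) (fun τ _ => hqnonneg σ τ), hprodq σ hσ] at this
  have hsumτ : ∀ τ : Equiv.Perm (Fin n), ∑ σ ∈ SDR, q σ τ ≤ 1 := by
    intro τ
    have h0 : (univ.filter fun i : Fin n => n - n ≤ (τ i : ℕ)) = univ := by
      apply Finset.filter_true_of_mem
      intro i _
      omega
    have := claim1 S τ n SDR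
      (fun σ hσ i _ => (Finset.mem_filter.mp hσ).2 i)
      (fun σ _ σ' _ hag => Equiv.ext fun j => hag j (by omega))
      (fun σ _ σ' _ j hj => absurd hj (by omega))
    rwa [h0] at this
  have hmain : (SDR.card : ℝ) * (((D:ℝ))⁻¹) ^ (((n.factorial : ℝ))⁻¹) ≤ 1 := by
    calc (SDR.card : ℝ) * (((D:ℝ))⁻¹) ^ (((n.factorial : ℝ))⁻¹)
        = ∑ _σ ∈ SDR, (((D:ℝ))⁻¹) ^ (((n.factorial : ℝ))⁻¹) := by
          rw [Finset.sum_const, nsmul_eq_mul]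
      _ ≤ ∑ σ ∈ SDR, ∑ τ : Equiv.Perm (Fin n), ((n.factorial : ℝ))⁻¹ * q σ τ :=
          Finset.sum_le_sum hamgm
      _ = ((n.factorial : ℝ))⁻¹ * ∑ τ : Equiv.Perm (Fin n), ∑ σ ∈ SDR, q σ τ := by
          rw [Finset.sum_comm, Finset.mul_sum]
          apply Finset.sum_congr rfl
          intro τ _
          rw [Finset.mul_sum]
      _ ≤ ((n.factorial : ℝ))⁻¹ * ∑ _τ : Equiv.Perm (Fin n), (1:ℝ) := by
          apply mul_le_mul_of_nonneg_left _ (by positivity)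
          exact Finset.sum_le_sum fun τ _ => hsumτ τ
      _ = 1 := by
          rw [Finset.sum_const, Finset.card_univ, Fintype.card_perm, Fintype.card_fin,
            nsmul_eq_mul, mul_one, inv_mul_cancel₀ (by positivity)]
  have hEpos : (0:ℝ) < (((D:ℝ))⁻¹) ^ (((n.factorial : ℝ))⁻¹) :=
    Real.rpow_pos_of_pos (by positivity) _
  have hcard : (SDR.card : ℝ) ≤ ((D:ℝ)) ^ (((n.factorial : ℝ))⁻¹) := by
    have h1 : (SDR.card : ℝ) ≤ ((((D:ℝ))⁻¹) ^ (((n.factorial : ℝ))⁻¹))⁻¹ := by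
      rw [← one_div, le_div_iff₀ hEpos]
      exact hmain
    rwa [← Real.inv_rpow (by positivity), inv_inv] at h1
  refine le_trans hcard (le_of_eq ?_)
  rw [hD]
  push_cast
  rw [← Real.finset_prod_rpow univ _ (fun i _ => by positivity)]
  apply Finset.prod_congr rfl
  intro i _
  rw [← Real.rpow_natCast ((S i).card.factorial : ℝ) (n.factorial / (S i).card),
    ← Real.rpow_mul (by positivity)]
  congr 1
  have hdvd : (S i).card ∣ n.factorial :=
    Nat.dvd_factorial (hrpos i) (le_trans (Finset.card_le_univ _) (by simp))
  have hmr : (n.factorial / (S i).card) * (S i).card = n.factorial := Nat.div_mul_cancel hdvd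
  have hne1 : ((S i).card : ℝ) ≠ 0 := Nat.cast_ne_zero.mpr (hrpos i).ne'
  have hne2 : ((n.factorial : ℝ)) ≠ 0 := by positivity
  have hcast : ((n.factorial / (S i).card : ℕ) : ℝ) = (n.factorial : ℝ) / ((S i).card : ℝ) := by
    rw [eq_div_iff hne1]
    exact_mod_cast hmr
  rw [hcast]
  field_simp

lemma factorial_rpow_mono {r m : ℕ} (hr : 1 ≤ r) (hrm : r ≤ m) :
    ((r.factorial : ℝ)) ^ (((r : ℝ))⁻¹) ≤ ((m.factorial : ℝ)) ^ (((m : ℝ))⁻¹) := by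
  induction m, hrm using Nat.le_induction with
  | base => exact le_refl _
  | succ m hm ih =>
    refine le_trans ih ?_
    have hm1 : 1 ≤ m := le_trans hr hm
    set a : ℝ := ((m.factorial : ℝ)) ^ (((m : ℝ))⁻¹) with ha
    set b : ℝ := (((m+1).factorial : ℝ)) ^ ((((m+1 : ℕ)):ℝ))⁻¹ with hb
    have hae : (((m+1):ℕ) : ℝ) = (m:ℝ)+1 := by push_cast; ring
    have ha0 : (0:ℝ) ≤ a := Real.rpow_nonneg (by positivity) _
    have hb0 : (0:ℝ) ≤ b := Real.rpow_nonneg (by positivity) _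
    have hN : m * (m+1) ≠ 0 := by positivity
    rw [← pow_le_pow_iff_left₀ ha0 hb0 hN]
    have haN : a ^ (m * (m+1)) = ((m.factorial ^ (m+1) : ℕ) : ℝ) := by
      rw [ha, ← Real.rpow_natCast (((m.factorial : ℝ)) ^ (((m : ℝ))⁻¹)) (m*(m+1)),
        ← Real.rpow_mul (by positivity)]
      have : ((m:ℝ))⁻¹ * ((m*(m+1) : ℕ) : ℝ) = ((m+1 : ℕ) : ℝ) := by
        push_cast
        field_simp
      rw [this, Real.rpow_natCast]
      push_cast
      ring
    have hbN : b ^ (m * (m+1)) = (((m+1).factorial ^ m : ℕ) : ℝ) := by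
      rw [hb, ← Real.rpow_natCast ((((m+1).factorial : ℝ)) ^ ((((m+1 : ℕ)):ℝ))⁻¹) (m*(m+1)),
        ← Real.rpow_mul (by positivity)]
      have : ((((m+1 : ℕ)):ℝ))⁻¹ * ((m*(m+1) : ℕ) : ℝ) = ((m : ℕ) : ℝ) := by
        push_cast
        have hne : ((m:ℝ)+1) ≠ 0 := by positivity
        field_simp
      rw [this, Real.rpow_natCast]
      push_cast
      ring
    rw [haN, hbN, Nat.cast_le]
    -- m!^(m+1) ≤ (m+1)!^m
    have key : m.factorial ≤ (m+1) ^ m :=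
      le_trans (Nat.factorial_le_pow m) (Nat.pow_le_pow_left (by omega) m)
    calc m.factorial ^ (m+1) = m.factorial ^ m * m.factorial := by ring
      _ ≤ m.factorial ^ m * (m+1) ^ m := Nat.mul_le_mul_left _ key
      _ = ((m+1) * m.factorial) ^ m := by rw [mul_pow]; ring
      _ = (m+1).factorial ^ m := by rw [Nat.factorial_succ]

lemma bregman_bounded (S : Fin n → Finset (Fin n)) (w : Fin n) (k : ℕ)
    (hS : ∀ u, u ≠ w → 1 ≤ (S u).card ∧ (S u).card ≤ k + 1) (hw : (S w).card ≤ 1) :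
    (((univ : Finset (Equiv.Perm (Fin n))).filter fun σ => ∀ i, σ i ∈ S i).card : ℝ)
      ≤ (((k+1).factorial : ℝ) ^ ((((k+1):ℝ))⁻¹)) ^ (n - 1) := by
  refine le_trans (bregman S) ?_
  have hfw : ((S w).card.factorial : ℝ) ^ (((S w).card : ℝ))⁻¹ = 1 := by
    interval_cases h : (S w).card <;> norm_num
  rw [← Finset.prod_erase_mul univ _ (Finset.mem_univ w), hfw, mul_one]
  have hle : ∀ u ∈ univ.erase w,
      ((S u).card.factorial : ℝ) ^ (((S u).card : ℝ))⁻¹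
        ≤ ((k+1).factorial : ℝ) ^ ((((k+1):ℝ))⁻¹) := by
    intro u hu
    have hu' := Finset.ne_of_mem_erase hu
    obtain ⟨h1, h2⟩ := hS u hu'
    have := factorial_rpow_mono h1 h2
    convert this using 3
    push_cast
    ring
  calc ∏ u ∈ univ.erase w, ((S u).card.factorial : ℝ) ^ (((S u).card : ℝ))⁻¹
      ≤ ∏ _u ∈ univ.erase w, ((k+1).factorial : ℝ) ^ ((((k+1):ℝ))⁻¹) := by
        apply Finset.prod_le_prod
        · intro u _; exact Real.rpow_nonneg (by positivity) _
        · exact hle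
    _ = (((k+1).factorial : ℝ) ^ ((((k+1):ℝ))⁻¹)) ^ (n - 1) := by
        rw [Finset.prod_const, Finset.card_erase_of_mem (Finset.mem_univ w), Finset.card_univ,
          Fintype.card_fin]

end PCaux


namespace PCaux2

variable {n : ℕ}

lemma iterate_mem {f : Fin n → Fin n} {s : Finset (Fin n)} (h3 : ∀ v ∈ s, f v ∈ s) :
    ∀ (i : ℕ) (v : Fin n), v ∈ s → f^[i] v ∈ s := by
  intro i
  induction i with
  | zero => intro v hv; simpa using hv
  | succ i ih =>
    intro v hv
    rw [Function.iterate_succ_apply]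
    exact ih (f v) (h3 v hv)

lemma iterate_mul_period {f : Fin n → Fin n} {v : Fin n} {m : ℕ} (hm : f^[m] v = v) :
    ∀ q, f^[q * m] v = v := by
  intro q
  induction q with
  | zero => simp
  | succ q ih =>
    have : (q + 1) * m = m + q * m := by ring
    rw [this, Function.iterate_add_apply, ih, hm]

/-- every vertex of `s` reaches a periodic point -/
lemma reach_periodic {f : Fin n → Fin n} {s : Finset (Fin n)} (h3 : ∀ v ∈ s, f v ∈ s) :
    ∀ v ∈ s, ∃ i m, 0 < m ∧ f^[m] (f^[i] v) = f^[i] v := by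
  intro v hv
  have hmap : ∀ i ∈ Finset.range (s.card + 1), f^[i] v ∈ s := fun i _ => iterate_mem h3 i v hv
  have hlt : s.card < (Finset.range (s.card + 1)).card := by simp
  obtain ⟨i, hi, j, hj, hij, heq⟩ := Finset.exists_ne_map_eq_of_card_lt_of_maps_to hlt hmap
  rcases Nat.lt_or_ge i j with h | h
  · refine ⟨i, j - i, by omega, ?_⟩
    rw [← Function.iterate_add_apply]
    have : j - i + i = j := by omega
    rw [this, ← heq]
  · have hji : j < i := by omega
    refine ⟨j, i - j, by omega, ?_⟩
    rw [← Function.iterate_add_apply]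
    have : i - j + j = i := by omega
    rw [this, heq]

/-- Structure theorem for path-cycle pairs: they can be encoded by a permutation. -/
lemma encode_exists (s : Finset (Fin n)) (f : Fin n → Fin n)
    (h1 : s.Nonempty) (h2 : ∀ v, v ∉ s → f v = v) (h3 : ∀ v ∈ s, f v ∈ s)
    (h4 : ∀ u ∈ s, ∀ v ∈ s,
      Relation.ReflTransGen (fun a b => (a ∈ s ∧ f a = b) ∨ (b ∈ s ∧ f b = a)) u v)
    (h5 : (s.filter fun v => ∀ u ∈ s, f u ≠ v).card ≤ 1) :
    ∃ (w : Fin n) (σ : Equiv.Perm (Fin n)),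
      w ∈ s ∧ (∀ u, u ≠ w → σ u = f u) ∧
      s = univ.filter (fun y => (∃ i, (⇑σ)^[i] (f w) = y) ∨ (∃ i, (⇑σ)^[i] (σ w) = y)) := by
  classical
  set Per : Finset (Fin n) := s.filter (fun v => ∃ m, 0 < m ∧ f^[m] v = v) with hPer
  have hPer_mem : ∀ {v}, v ∈ Per ↔ v ∈ s ∧ ∃ m, 0 < m ∧ f^[m] v = v := by
    intro v; rw [hPer, Finset.mem_filter]
  have hPer_sub : Per ⊆ s := fun v hv => (hPer_mem.mp hv).1
  have hreach : ∀ v ∈ s, ∃ i, f^[i] v ∈ Per := by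
    intro v hv
    obtain ⟨i, m, hm, hfix⟩ := reach_periodic h3 v hv
    exact ⟨i, hPer_mem.mpr ⟨iterate_mem h3 i v hv, m, hm, hfix⟩⟩
  have hfPer : ∀ x ∈ Per, f x ∈ Per := by
    intro x hx
    obtain ⟨hxs, m, hm, hfix⟩ := hPer_mem.mp hx
    refine hPer_mem.mpr ⟨h3 x hxs, m, hm, ?_⟩
    rw [← Function.iterate_succ_apply, Function.iterate_succ_apply', hfix]
  have hPerIter : ∀ (j : ℕ), ∀ x ∈ Per, f^[j] x ∈ Per := by
    intro j
    induction j with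
    | zero => intro x hx; simpa using hx
    | succ j ih =>
      intro x hx
      rw [Function.iterate_succ_apply]
      exact ih (f x) (hfPer x hx)
  have hinjPer : ∀ x ∈ Per, ∀ y ∈ Per, f x = f y → x = y := by
    intro x hx y hy hxy
    obtain ⟨hxs, m, hm, hfix⟩ := hPer_mem.mp hx
    obtain ⟨hys, m', hm', hfix'⟩ := hPer_mem.mp hy
    have hMx : f^[m * m'] x = x := by
      have : m * m' = m' * m := by ring
      rw [this]; exact iterate_mul_period hfix m'
    have hMy : f^[m * m'] y = y := iterate_mul_period hfix' m
    have hM1 : 1 ≤ m * m' := Nat.one_le_iff_ne_zero.mpr (by positivity)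
    have hsub : m * m' = (m * m' - 1) + 1 := by omega
    rw [hsub] at hMx hMy
    calc x = f^[(m * m' - 1) + 1] x := hMx.symm
      _ = f^[m * m' - 1] (f x) := Function.iterate_succ_apply f _ x
      _ = f^[m * m' - 1] (f y) := by rw [hxy]
      _ = f^[(m * m' - 1) + 1] y := (Function.iterate_succ_apply f _ y).symm
      _ = y := hMy
  have hmerge : ∀ u ∈ s, ∀ v ∈ s, ∃ i j, f^[i] u = f^[j] v := by
    intro u hu v hv
    induction h4 u hu v hv with
    | refl => exact ⟨0, 0, rfl⟩
    | @tail b c hbc step ih =>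
      rcases step with ⟨hbs, hfb⟩ | ⟨hcs, hfc⟩
      · obtain ⟨i, j, hij⟩ := ih hbs
        refine ⟨i + 1, j, ?_⟩
        rw [Function.iterate_succ_apply', hij, ← Function.iterate_succ_apply' f j b,
          Function.iterate_succ_apply, hfb]
      · obtain ⟨i, j, hij⟩ := ih (by rw [← hfc]; exact h3 _ hcs)
        refine ⟨i, j + 1, ?_⟩
        rw [Function.iterate_succ_apply, hfc, hij]
  have hsingle : ∀ x ∈ Per, ∀ y ∈ Per, ∃ t, f^[t] x = y := by
    intro x hx y hy
    obtain ⟨i, j, hij⟩ := hmerge x (hPer_sub hx) y (hPer_sub hy)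
    obtain ⟨hys, m', hm', hfix'⟩ := hPer_mem.mp hy
    set N := (j + 1) * m' with hN
    have hNj : j ≤ N := by
      have : j + 1 ≤ (j+1) * m' := Nat.le_mul_of_pos_right _ hm'
      omega
    have hNy : f^[N] y = y := iterate_mul_period hfix' (j+1)
    refine ⟨N - j + i, ?_⟩
    rw [Function.iterate_add_apply, hij, ← Function.iterate_add_apply]
    have : N - j + j = N := by omega
    rw [this, hNy]
  -- case split : pure cycle or has a tail
  by_cases hcase : ∀ v ∈ s, v ∈ Per
  · -- pure cycle case
    obtain ⟨x₁, hx₁s⟩ := h1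
    have hx₁ : x₁ ∈ Per := hcase x₁ hx₁s
    -- f is injective
    have hginj : Function.Injective f := by
      intro a b hab
      by_cases ha : a ∈ s <;> by_cases hb : b ∈ s
      · exact hinjPer a (hcase a ha) b (hcase b hb) hab
      · exfalso; rw [h2 b hb] at hab; rw [← hab] at hb; exact hb (h3 a ha)
      · exfalso; rw [h2 a ha] at hab; rw [hab] at ha; exact ha (h3 b hb)
      · rw [h2 a ha, h2 b hb] at hab; exact hab
    -- surjectivity onto Per : find w with f w = x₁
    have hsurj : ∀ y ∈ Per, ∃ x, ∃ _ : x ∈ Per, y = f x := by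
      apply Finset.surj_on_of_inj_on_of_card_le (fun x _ => f x)
      · intro x hx; exact hfPer x hx
      · intro a₁ a₂ ha₁ ha₂ h; exact hginj h
      · exact le_refl _
    obtain ⟨w, hwPer, hfwx₁⟩ := hsurj x₁ hx₁
    set σ : Equiv.Perm (Fin n) := Equiv.ofBijective f (Finite.injective_iff_bijective.mp hginj)
      with hσ
    have hσf : ∀ u, σ u = f u := fun u => rfl
    have hσiter : ∀ (i : ℕ) (u : Fin n), (⇑σ)^[i] u = f^[i] u := by
      intro i u
      have : ⇑σ = f := funext hσf
      rw [this]
    refine ⟨w, σ, hPer_sub hwPer, fun u _ => hσf u, ?_⟩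
    ext y
    simp only [Finset.mem_filter, Finset.mem_univ, true_and]
    constructor
    · intro hy
      left
      obtain ⟨t, ht⟩ := hsingle (f w) (hfPer w hwPer) y (hcase y hy)
      exact ⟨t, by rw [hσiter]; exact ht⟩
    · rintro (⟨i, hi⟩ | ⟨i, hi⟩)
      · rw [← hi, hσiter]
        exact hPer_sub (hPerIter i (f w) (hfPer w hwPer))
      · rw [← hi, hσiter, hσf]
        exact hPer_sub (hPerIter i (f w) (hfPer w hwPer))
  · -- tail case
    push_neg at hcase
    obtain ⟨v₀, hv₀s, hv₀Per⟩ := hcase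
    have hsum : ∑ v ∈ s, (s.filter fun u => f u = v).card = s.card :=
      (Finset.card_eq_sum_card_fiberwise h3).symm
    -- existence of a source
    have hSrc : ∃ v₁ ∈ s, ∀ u ∈ s, f u ≠ v₁ := by
      by_contra hno
      push_neg at hno
      have hinj_s : ∀ a ∈ s, ∀ b ∈ s, f a = f b → a = b := by
        intro a ha b hb hab
        by_contra hne
        have hx : f a ∈ s := h3 a ha
        have h2card : 2 ≤ (s.filter fun u => f u = f a).card :=
          Finset.one_lt_card.mpr
            ⟨a, Finset.mem_filter.mpr ⟨ha, rfl⟩, b, Finset.mem_filter.mpr ⟨hb, hab.symm⟩, hne⟩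
        have hge1 : ∀ v ∈ s.erase (f a), 1 ≤ (s.filter fun u => f u = v).card := by
          intro v hv
          obtain ⟨u, hu, hufv⟩ := hno v (Finset.mem_of_mem_erase hv)
          exact Finset.card_pos.mpr ⟨u, Finset.mem_filter.mpr ⟨hu, hufv⟩⟩
        have hsplit : (∑ v ∈ s.erase (f a), (s.filter fun u => f u = v).card)
            + (s.filter fun u => f u = f a).card
            = ∑ v ∈ s, (s.filter fun u => f u = v).card := Finset.sum_erase_add s _ hx
        have hsum_ge : (s.erase (f a)).card
            ≤ ∑ v ∈ s.erase (f a), (s.filter fun u => f u = v).card := by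
          calc (s.erase (f a)).card = ∑ _v ∈ s.erase (f a), 1 := by
                rw [Finset.sum_const, smul_eq_mul, mul_one]
            _ ≤ _ := Finset.sum_le_sum hge1
        have hce : (s.erase (f a)).card = s.card - 1 := Finset.card_erase_of_mem hx
        have hs1 : 1 ≤ s.card := Finset.card_pos.mpr h1
        omega
      have hcancel : ∀ (i : ℕ), ∀ x ∈ s, ∀ y ∈ s, f^[i] x = f^[i] y → x = y := by
        intro i
        induction i with
        | zero => intro x _ y _ h; simpa using h
        | succ i ih =>
          intro x hx y hy h
          rw [Function.iterate_succ_apply, Function.iterate_succ_apply] at h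
          exact hinj_s x hx y hy (ih (f x) (h3 x hx) (f y) (h3 y hy) h)
      obtain ⟨i, m, hm, hfix⟩ := reach_periodic h3 v₀ hv₀s
      have hxx : f^[i] (f^[m] v₀) = f^[i] v₀ := by
        rw [← Function.iterate_add_apply, Nat.add_comm, Function.iterate_add_apply]
        exact hfix
      have hper : f^[m] v₀ = v₀ := hcancel i (f^[m] v₀) (iterate_mem h3 m v₀ hv₀s) v₀ hv₀s hxx
      exact hv₀Per (hPer_mem.mpr ⟨hv₀s, m, hm, hper⟩)
    obtain ⟨v₁, hv₁s, hv₁src⟩ := hSrc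
    have hv₁Per : v₁ ∉ Per := by
      intro hv₁
      have hsurj : ∀ y ∈ Per, ∃ x, ∃ _ : x ∈ Per, y = f x :=
        Finset.surj_on_of_inj_on_of_card_le (fun x _ => f x) (fun x hx => hfPer x hx)
          (fun a₁ a₂ ha₁ ha₂ h => hinjPer a₁ ha₁ a₂ ha₂ h) (le_refl _)
      obtain ⟨u, hu, hufv⟩ := hsurj v₁ hv₁
      exact hv₁src u (hPer_sub hu) hufv.symm
    -- cover: every non-periodic vertex is on the tail from v₁
    have hcover : ∀ u ∈ s, u ∉ Per → ∃ i, f^[i] v₁ = u := by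
      intro u hus huPer
      by_contra hno
      set W : Finset (Fin n) := s.filter (fun x => x ∉ Per ∧ ¬ ∃ i, f^[i] v₁ = x) with hW
      have huW : u ∈ W := Finset.mem_filter.mpr ⟨hus, huPer, hno⟩
      have hpreex : ∀ x ∈ W, ∃ x', x' ∈ W ∧ f x' = x := by
        intro x hx
        obtain ⟨hxs, hxPer, hxno⟩ := Finset.mem_filter.mp hx
        have hxv₁ : x ≠ v₁ := fun h => hxno ⟨0, by simp [h.symm]⟩
        have hnotsrc : ¬ ∀ u' ∈ s, f u' ≠ x := by
          intro hxsrc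
          have hxmem : x ∈ s.filter (fun v => ∀ u ∈ s, f u ≠ v) :=
            Finset.mem_filter.mpr ⟨hxs, hxsrc⟩
          have hv₁mem : v₁ ∈ s.filter (fun v => ∀ u ∈ s, f u ≠ v) :=
            Finset.mem_filter.mpr ⟨hv₁s, hv₁src⟩
          exact hxv₁ (Finset.card_le_one.mp h5 x hxmem v₁ hv₁mem)
        push_neg at hnotsrc
        obtain ⟨x', hx's, hfx'⟩ := hnotsrc
        refine ⟨x', Finset.mem_filter.mpr ⟨hx's, ?_, ?_⟩, hfx'⟩
        · intro hx'Per; exact hxPer (hfx' ▸ hfPer x' hx'Per)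
        · rintro ⟨i, hi⟩
          exact hxno ⟨i+1, by rw [Function.iterate_succ_apply', hi, hfx']⟩
      set pre : Fin n → Fin n :=
        fun x => if h : ∃ x', x' ∈ W ∧ f x' = x then h.choose else x with hpredef
      have hpre1 : ∀ x ∈ W, pre x ∈ W ∧ f (pre x) = x := by
        intro x hx
        have hex := hpreex x hx
        rw [hpredef]
        simp only [dif_pos hex]
        exact hex.choose_spec
      have hiterW : ∀ (j : ℕ), ∀ x ∈ W, pre^[j] x ∈ W ∧ f^[j] (pre^[j] x) = x := by
        intro j
        induction j with
        | zero => intro x hx; exact ⟨by simpa using hx, by simp⟩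
        | succ j ih =>
          intro x hx
          obtain ⟨hpW, hpf⟩ := hpre1 x hx
          obtain ⟨hW', hf'⟩ := ih (pre x) hpW
          constructor
          · rw [Function.iterate_succ_apply]; exact hW'
          · have e1 : pre^[j+1] x = pre^[j] (pre x) := Function.iterate_succ_apply pre j x
            rw [e1, Function.iterate_succ_apply' f j, hf', hpf]
      have hmapsW : ∀ j ∈ Finset.range (W.card + 1), pre^[j] u ∈ W :=
        fun j _ => (hiterW j u huW).1
      have hltW : W.card < (Finset.range (W.card+1)).card := by simp
      obtain ⟨i, hi, j, hj, hij, heq⟩ :=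
        Finset.exists_ne_map_eq_of_card_lt_of_maps_to hltW hmapsW
      have key : ∀ i j : ℕ, i < j → pre^[i] u = pre^[j] u → False := by
        intro i j hij heq
        set x := pre^[i] u with hx
        have hxW : x ∈ W := (hiterW i u huW).1
        have hpx : pre^[j-i] x = x := by
          rw [hx, ← Function.iterate_add_apply]
          have : j - i + i = j := by omega
          rw [this, ← heq]
        have hfx : f^[j-i] x = x := by
          have := (hiterW (j-i) x hxW).2
          rw [hpx] at this
          exact this
        obtain ⟨hxs, hxPer, _⟩ := Finset.mem_filter.mp hxW
        exact hxPer (hPer_mem.mpr ⟨hxs, j - i, by omega, hfx⟩)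
      rcases Nat.lt_or_ge i j with h | h
      · exact key i j h heq
      · exact key j i (by omega) heq.symm
    -- first entry time into Per
    have hex : ∃ i, f^[i] v₁ ∈ Per := hreach v₁ hv₁s
    set p := Nat.find hex with hp
    have hpPer : f^[p] v₁ ∈ Per := Nat.find_spec hex
    have hpmin : ∀ q < p, f^[q] v₁ ∉ Per := fun q hq => Nat.find_min hex hq
    have hppos : 0 < p := by
      rcases Nat.eq_zero_or_pos p with h0 | h
      · exfalso; apply hv₁Per; have := hpPer; rw [h0] at this; simpa using this
      · exact h
    set w := f^[p-1] v₁ with hw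
    have hws : w ∈ s := iterate_mem h3 _ _ hv₁s
    have hwPer : w ∉ Per := hpmin (p-1) (by omega)
    have hfw : f w = f^[p] v₁ := by
      rw [hw, ← Function.iterate_succ_apply' f (p-1) v₁]
      congr 1
      omega
    have hfwPer : f w ∈ Per := by rw [hfw]; exact hpPer
    have htaildist : ∀ i j, i < j → j < p → f^[i] v₁ ≠ f^[j] v₁ := by
      intro i j hij hjp heq
      apply hpmin i (by omega)
      refine hPer_mem.mpr ⟨iterate_mem h3 i v₁ hv₁s, j - i, by omega, ?_⟩
      rw [← Function.iterate_add_apply]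
      have : j - i + i = j := by omega
      rw [this, ← heq]
    have htail_lt : ∀ u ∈ s, u ∉ Per → ∃ i, i < p ∧ f^[i] v₁ = u := by
      intro u hus huPer
      obtain ⟨i, hi⟩ := hcover u hus huPer
      rcases Nat.lt_or_ge i p with h | h
      · exact ⟨i, h, hi⟩
      · exfalso
        apply huPer
        rw [← hi]
        have : f^[i] v₁ = f^[i - p] (f^[p] v₁) := by
          rw [← Function.iterate_add_apply]
          congr 1
          omega
        rw [this]
        exact hPerIter _ _ hpPer
    -- the permutation
    set g : Fin n → Fin n := fun u => if u = w then v₁ else f u with hg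
    have hgw : g w = v₁ := by rw [hg]; simp
    have hgne : ∀ u, u ≠ w → g u = f u := by intro u hu; rw [hg]; simp [hu]
    have hginj : Function.Injective g := by
      intro a b hab
      by_cases haw : a = w <;> by_cases hbw : b = w
      · rw [haw, hbw]
      · exfalso
        rw [haw, hgw, hgne b hbw] at hab
        by_cases hbs : b ∈ s
        · exact hv₁src b hbs hab.symm
        · rw [h2 b hbs] at hab; rw [← hab] at hbs; exact hbs hv₁s
      · exfalso
        rw [hbw, hgw, hgne a haw] at hab
        by_cases has : a ∈ s
        · exact hv₁src a has hab
        · rw [h2 a has] at hab; rw [hab] at has; exact has hv₁s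
      · rw [hgne a haw, hgne b hbw] at hab
        by_cases has : a ∈ s <;> by_cases hbs : b ∈ s
        · by_cases haPer : a ∈ Per <;> by_cases hbPer : b ∈ Per
          · exact hinjPer a haPer b hbPer hab
          · exfalso
            obtain ⟨i, hip, hiv⟩ := htail_lt b hbs hbPer
            have hipp : i ≠ p - 1 := by
              intro h
              apply hbw
              rw [← hiv, h, ← hw]
            have hfb : f b = f^[i+1] v₁ := by
              rw [← hiv, ← Function.iterate_succ_apply' f i v₁]
            apply hpmin (i+1) (by omega)
            rw [← hfb, ← hab]
            exact hfPer a haPer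
          · exfalso
            obtain ⟨i, hip, hiv⟩ := htail_lt a has haPer
            have hipp : i ≠ p - 1 := by
              intro h
              apply haw
              rw [← hiv, h, ← hw]
            have hfa : f a = f^[i+1] v₁ := by
              rw [← hiv, ← Function.iterate_succ_apply' f i v₁]
            apply hpmin (i+1) (by omega)
            rw [← hfa, hab]
            exact hfPer b hbPer
          · obtain ⟨i, hip, hiv⟩ := htail_lt a has haPer
            obtain ⟨j, hjp, hjv⟩ := htail_lt b hbs hbPer
            have hi1 : i ≠ p-1 := by
              intro h; apply haw; rw [← hiv, h, ← hw]
            have hj1 : j ≠ p-1 := by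
              intro h; apply hbw; rw [← hjv, h, ← hw]
            have hfa : f a = f^[i+1] v₁ := by
              rw [← hiv, ← Function.iterate_succ_apply' f i v₁]
            have hfb : f b = f^[j+1] v₁ := by
              rw [← hjv, ← Function.iterate_succ_apply' f j v₁]
            have hijeq : i = j := by
              by_contra hne
              rcases Nat.lt_or_ge i j with h | h
              · exact htaildist (i+1) (j+1) (by omega) (by omega)
                  (by rw [← hfa, ← hfb, hab])
              · exact htaildist (j+1) (i+1) (by omega) (by omega)
                  (by rw [← hfa, ← hfb, hab])
            rw [← hiv, ← hjv, hijeq]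
        · exfalso
          rw [h2 b hbs] at hab
          have : f a ∈ s := h3 a has
          rw [hab] at this
          exact hbs this
        · exfalso
          rw [h2 a has] at hab
          have : f b ∈ s := h3 b hbs
          rw [← hab] at this
          exact has this
        · rw [h2 a has, h2 b hbs] at hab; exact hab
    set σ : Equiv.Perm (Fin n) :=
      Equiv.ofBijective g (Finite.injective_iff_bijective.mp hginj) with hσ
    have hσg : ∀ u, σ u = g u := fun u => rfl
    have horb1 : ∀ (i : ℕ), (⇑σ)^[i] (f w) = f^[i] (f w) ∧ f^[i] (f w) ∈ Per := by
      intro i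
      induction i with
      | zero => exact ⟨rfl, hfwPer⟩
      | succ i ih =>
        obtain ⟨he, hm⟩ := ih
        have hne : f^[i] (f w) ≠ w := fun h => hwPer (h ▸ hm)
        refine ⟨?_, hPerIter (i+1) (f w) hfwPer⟩
        rw [Function.iterate_succ_apply' (⇑σ) i, he, hσg, hgne _ hne,
          ← Function.iterate_succ_apply' f i]
    have horb2 : ∀ i, i < p → (⇑σ)^[i] v₁ = f^[i] v₁ := by
      intro i
      induction i with
      | zero => intro _; rfl
      | succ i ih =>
        intro hip
        have hi : i < p := by omega
        have hiw : f^[i] v₁ ≠ w := by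
          intro h
          rw [hw] at h
          exact htaildist i (p-1) (by omega) (by omega) h
        rw [Function.iterate_succ_apply' (⇑σ) i, ih hi, hσg, hgne _ hiw,
          ← Function.iterate_succ_apply' f i]
    have hσpv₁ : (⇑σ)^[p] v₁ = v₁ := by
      have hpe : p = (p-1) + 1 := by omega
      rw [hpe, Function.iterate_succ_apply' (⇑σ) (p-1), horb2 (p-1) (by omega), ← hw, hσg, hgw]
    have horbmod : ∀ i, (⇑σ)^[i] v₁ = (⇑σ)^[i % p] v₁ := by
      intro i
      have hq : ∀ q, (⇑σ)^[q * p] v₁ = v₁ := iterate_mul_period hσpv₁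
      conv_lhs => rw [← Nat.mod_add_div i p]
      rw [Function.iterate_add_apply]
      have hqq : (⇑σ)^[p * (i / p)] v₁ = v₁ := by rw [mul_comm]; exact hq (i/p)
      rw [hqq]
    refine ⟨w, σ, hws, fun u hu => by rw [hσg, hgne u hu], ?_⟩
    ext y
    simp only [Finset.mem_filter, Finset.mem_univ, true_and]
    constructor
    · intro hy
      by_cases hyPer : y ∈ Per
      · left
        obtain ⟨t, ht⟩ := hsingle (f w) hfwPer y hyPer
        exact ⟨t, by rw [(horb1 t).1]; exact ht⟩
      · right
        obtain ⟨i, hip, hiv⟩ := htail_lt y hy hyPer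
        refine ⟨i, ?_⟩
        rw [hσg, hgw, horb2 i hip, hiv]
    · rintro (⟨i, hi⟩ | ⟨i, hi⟩)
      · rw [← hi, (horb1 i).1]
        exact hPer_sub (hPerIter i (f w) hfwPer)
      · rw [← hi, hσg, hgw, horbmod i, horb2 (i % p) (Nat.mod_lt i hppos)]
        exact iterate_mem h3 _ _ hv₁s

end PCaux2


namespace PCaux3

open PCaux PCaux2

lemma card_le_one_convert {α : Type*} {p : α → Prop} {i1 i2 : DecidablePred p}
    {s : Finset α} (h : (@Finset.filter α p i1 s).card ≤ 1) :
    (@Finset.filter α p i2 s).card ≤ 1 := by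
  have he : @Finset.filter α p i1 s = @Finset.filter α p i2 s :=
    @Finset.filter_congr_decidable α s p i1 i2
  rwa [he] at h

theorem main (n k : ℕ) (hn : 1 ≤ n) (hk : 2 ≤ k) (G : Fin n → Fin n → ℕ)
    (hdeg : ∀ v : Fin n, (∑ u, G v u) = k) :
    (pathCycleCount (fun u v : Fin n => min (G u v) 1) : ℝ) ≤
      (n : ℝ) ^ 2 * (k : ℝ) *
        (Nat.factorial (k + 1) : ℝ) ^ (((n : ℝ) - 1) / ((k : ℝ) + 1)) := by
  classical
  haveI : Nonempty (Fin n) := ⟨⟨0, hn⟩⟩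
  set G' : Fin n → Fin n → ℕ := fun u v => min (G u v) 1 with hG'
  set S : Fin n → Finset (Fin n) :=
    fun u => insert u (univ.filter fun x => G' u x = 1) with hS
  have hG01 : ∀ u v, G' u v = 0 ∨ G' u v = 1 := by
    intro u v
    have h : G' u v = min (G u v) 1 := rfl
    rw [h]
    omega
  have hedges_card : ∀ u, (univ.filter fun x => G' u x = 1).card ≤ k := by
    intro u
    calc (univ.filter fun x => G' u x = 1).card
        = ∑ _x ∈ (univ.filter fun x => G' u x = 1), 1 := by
          rw [Finset.sum_const, smul_eq_mul, mul_one]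
      _ ≤ ∑ x ∈ (univ.filter fun x => G' u x = 1), G u x := by
          apply Finset.sum_le_sum
          intro x hx
          have hx1 := (Finset.mem_filter.mp hx).2
          have h : G' u x = min (G u x) 1 := rfl
          rw [h] at hx1
          omega
      _ ≤ ∑ x, G u x := Finset.sum_le_sum_of_subset (Finset.filter_subset _ _)
      _ = k := hdeg u
  have hScard : ∀ u, 1 ≤ (S u).card ∧ (S u).card ≤ k + 1 := by
    intro u
    constructor
    · exact Finset.card_pos.mpr ⟨u, Finset.mem_insert_self u _⟩
    · calc (S u).card ≤ (univ.filter fun x => G' u x = 1).card + 1 :=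
            Finset.card_insert_le _ _
        _ ≤ k + 1 := by have := hedges_card u; omega
  -- the support set
  set Supp : Finset (Finset (Fin n) × (Fin n → Fin n)) :=
    univ.filter (fun pr =>
      (pr.1.Nonempty ∧ (∀ v, v ∉ pr.1 → pr.2 v = v) ∧ (∀ v ∈ pr.1, pr.2 v ∈ pr.1) ∧
        (∀ u ∈ pr.1, ∀ v ∈ pr.1,
          Relation.ReflTransGen
            (fun a b => (a ∈ pr.1 ∧ pr.2 a = b) ∨ (b ∈ pr.1 ∧ pr.2 b = a)) u v) ∧
        (pr.1.filter fun v => ∀ u ∈ pr.1, pr.2 u ≠ v).card ≤ 1) ∧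
      ∀ v ∈ pr.1, G' v (pr.2 v) = 1) with hSupp
  -- Step A : pathCycleCount ≤ Supp.card
  have stepA : pathCycleCount G' ≤ Supp.card := by
    rw [hSupp, Finset.card_filter, Fintype.sum_prod_type]
    rw [pathCycleCount]
    dsimp only
    apply Finset.sum_le_sum
    intro s _
    apply Finset.sum_le_sum
    intro f _
    split_ifs with h1 h2 h3
    · apply Finset.prod_le_one (fun v _ => Nat.zero_le _)
      intro v hv
      have h : G' v (f v) = min (G v (f v)) 1 := rfl
      rw [h]
      exact Nat.min_le_right _ _
    · have hE : ¬ ∀ v ∈ s, G' v (f v) = 1 := by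
        intro h
        exact h2 ⟨⟨h1.1, h1.2.1, h1.2.2.1, h1.2.2.2.1, card_le_one_convert h1.2.2.2.2⟩, h⟩
      push_neg at hE
      obtain ⟨v, hv, hvne⟩ := hE
      have h0 : G' v (f v) = 0 := by
        rcases hG01 v (f v) with h | h
        · exact h
        · exact absurd h hvne
      rw [Finset.prod_eq_zero hv h0]
    · exact Nat.zero_le _
    · exact Nat.zero_le _
  -- Step B : injection into permutation encodings
  have hencEx : ∀ pr ∈ Supp, ∃ t : Fin n × Fin n × Equiv.Perm (Fin n),
      t.1 ∈ pr.1 ∧ t.2.1 = pr.2 t.1 ∧ (∀ u, u ≠ t.1 → t.2.2 u = pr.2 u) ∧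
      pr.1 = univ.filter
        (fun y => (∃ i, (⇑t.2.2)^[i] t.2.1 = y) ∨ (∃ i, (⇑t.2.2)^[i] (t.2.2 t.1) = y)) := by
    intro pr hpr
    rw [hSupp, Finset.mem_filter] at hpr
    obtain ⟨-, ⟨hc1, hc2, hc3, hc4, hc5⟩, hEdge⟩ := hpr
    obtain ⟨w, σ, hws, hσf, hsorb⟩ :=
      PCaux2.encode_exists pr.1 pr.2 hc1 hc2 hc3 hc4 (card_le_one_convert hc5)
    refine ⟨(w, pr.2 w, σ), hws, rfl, hσf, ?_⟩
    rw [hsorb]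
  set enc : (Finset (Fin n) × (Fin n → Fin n)) → (Fin n × Fin n × Equiv.Perm (Fin n)) :=
    fun pr => if h : ∃ t : Fin n × Fin n × Equiv.Perm (Fin n),
        t.1 ∈ pr.1 ∧ t.2.1 = pr.2 t.1 ∧ (∀ u, u ≠ t.1 → t.2.2 u = pr.2 u) ∧
        pr.1 = univ.filter
          (fun y => (∃ i, (⇑t.2.2)^[i] t.2.1 = y) ∨ (∃ i, (⇑t.2.2)^[i] (t.2.2 t.1) = y))
      then h.choose else (Classical.arbitrary _) with henc
  have hencP : ∀ pr ∈ Supp,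
      (enc pr).1 ∈ pr.1 ∧ (enc pr).2.1 = pr.2 (enc pr).1 ∧
      (∀ u, u ≠ (enc pr).1 → (enc pr).2.2 u = pr.2 u) ∧
      pr.1 = univ.filter
        (fun y => (∃ i, (⇑(enc pr).2.2)^[i] (enc pr).2.1 = y)
          ∨ (∃ i, (⇑(enc pr).2.2)^[i] ((enc pr).2.2 (enc pr).1) = y)) := by
    intro pr hpr
    have hex := hencEx pr hpr
    rw [henc]
    simp only [dif_pos hex]
    exact hex.choose_spec
  set E : Finset (Fin n × Fin n × Equiv.Perm (Fin n)) :=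
    univ.filter (fun t => G' t.1 t.2.1 = 1 ∧ ∀ u, u ≠ t.1 → t.2.2 u ∈ S u) with hE
  have hmapsE : ∀ pr ∈ Supp, enc pr ∈ E := by
    intro pr hpr
    obtain ⟨hw1, hw2, hw3, hw4⟩ := hencP pr hpr
    rw [hSupp, Finset.mem_filter] at hpr
    obtain ⟨-, ⟨hc1, hc2, hc3, hc4, hc5⟩, hEdge⟩ := hpr
    rw [hE, Finset.mem_filter]
    refine ⟨Finset.mem_univ _, ?_, ?_⟩
    · rw [hw2]; exact hEdge _ hw1
    · intro u hu
      rw [hw3 u hu]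
      by_cases hus : u ∈ pr.1
      · exact Finset.mem_insert_of_mem (Finset.mem_filter.mpr ⟨Finset.mem_univ _, hEdge u hus⟩)
      · rw [hc2 u hus]
        exact Finset.mem_insert_self u _
  have hinjE : Set.InjOn enc ↑Supp := by
    intro pr hpr pr' hpr' heq
    have h1 := hencP pr (by exact_mod_cast hpr)
    have h2' := hencP pr' (by exact_mod_cast hpr')
    rw [heq] at h1
    obtain ⟨ha1, ha2, ha3, ha4⟩ := h1
    obtain ⟨hb1, hb2, hb3, hb4⟩ := h2'
    have hf : pr.2 = pr'.2 := by
      funext u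
      by_cases hu : u = (enc pr').1
      · rw [hu]
        rw [← ha2, ← hb2]
      · rw [← ha3 u hu, ← hb3 u hu]
    have hs : pr.1 = pr'.1 := by rw [ha4, hb4]
    exact Prod.ext hs hf
  have stepB : Supp.card ≤ E.card := Finset.card_le_card_of_injOn enc hmapsE hinjE
  -- Step C : counting E via Bregman
  set Bk : ℝ := ((((k+1).factorial : ℝ)) ^ (((k:ℝ)+1))⁻¹) ^ (n-1) with hBk
  have hBk0 : (0:ℝ) ≤ Bk := pow_nonneg (Real.rpow_nonneg (by positivity) _) _
  have hperm_bound : ∀ w : Fin n,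
      (((univ : Finset (Equiv.Perm (Fin n))).filter fun σ => ∀ u, u ≠ w → σ u ∈ S u).card : ℝ)
        ≤ (n : ℝ) * Bk := by
    intro w
    have hfib : ((univ : Finset (Equiv.Perm (Fin n))).filter
          fun σ => ∀ u, u ≠ w → σ u ∈ S u).card
        = ∑ v₁ : Fin n, (((univ : Finset (Equiv.Perm (Fin n))).filter
            fun σ => ∀ u, u ≠ w → σ u ∈ S u).filter fun σ => σ w = v₁).card :=
      Finset.card_eq_sum_card_fiberwise (fun σ _ => Finset.mem_univ (σ w))
    rw [hfib]
    push_cast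
    have hone : ∀ v₁ : Fin n,
        ((((univ : Finset (Equiv.Perm (Fin n))).filter
            fun σ => ∀ u, u ≠ w → σ u ∈ S u).filter fun σ => σ w = v₁).card : ℝ) ≤ Bk := by
      intro v₁
      set S' : Fin n → Finset (Fin n) := Function.update S w {v₁} with hS'
      have hset : (((univ : Finset (Equiv.Perm (Fin n))).filter
            fun σ => ∀ u, u ≠ w → σ u ∈ S u).filter fun σ => σ w = v₁)
          = univ.filter (fun σ : Equiv.Perm (Fin n) => ∀ i, σ i ∈ S' i) := by
        rw [Finset.filter_filter]
        apply Finset.filter_congr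
        intro σ _
        constructor
        · rintro ⟨hrow, hww⟩ i
          by_cases hiw : i = w
          · rw [hiw, hS', Function.update_self, Finset.mem_singleton]
            exact hww
          · rw [hS', Function.update_of_ne hiw]
            exact hrow i hiw
        · intro hall
          constructor
          · intro u hu
            have := hall u
            rwa [hS', Function.update_of_ne hu] at this
          · have := hall w
            rwa [hS', Function.update_self, Finset.mem_singleton] at this
      rw [hset, hBk]
      apply PCaux.bregman_bounded S' w k
      · intro u hu
        rw [hS', Function.update_of_ne hu]
        exact hScard u
      · rw [hS', Function.update_self, Finset.card_singleton]
    calc ∑ v₁ : Fin n, ((((univ : Finset (Equiv.Perm (Fin n))).filter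
            fun σ => ∀ u, u ≠ w → σ u ∈ S u).filter fun σ => σ w = v₁).card : ℝ)
        ≤ ∑ _v₁ : Fin n, Bk := Finset.sum_le_sum fun v₁ _ => hone v₁
      _ = (n:ℝ) * Bk := by
          rw [Finset.sum_const, Finset.card_univ, Fintype.card_fin, nsmul_eq_mul]
  have hEcard : (E.card : ℝ) = ∑ w : Fin n, ∑ a : Fin n,
      if G' w a = 1 then
        (((univ : Finset (Equiv.Perm (Fin n))).filter fun σ => ∀ u, u ≠ w → σ u ∈ S u).card : ℝ)
      else 0 := by
    rw [hE, Finset.card_filter, Fintype.sum_prod_type]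
    push_cast
    apply Finset.sum_congr rfl
    intro w _
    rw [Fintype.sum_prod_type]
    apply Finset.sum_congr rfl
    intro a _
    by_cases hc : G' w a = 1
    · simp only [hc, true_and, if_true]
      rw [← Finset.sum_boole]
    · simp [hc]
  have stepC : (E.card : ℝ) ≤ (n:ℝ) * ((k:ℝ) * ((n:ℝ) * Bk)) := by
    rw [hEcard]
    calc ∑ w : Fin n, ∑ a : Fin n,
          (if G' w a = 1 then
            (((univ : Finset (Equiv.Perm (Fin n))).filter
              fun σ => ∀ u, u ≠ w → σ u ∈ S u).card : ℝ) else 0)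
        ≤ ∑ w : Fin n, ∑ a : Fin n, (if G' w a = 1 then (n:ℝ) * Bk else 0) := by
          apply Finset.sum_le_sum
          intro w _
          apply Finset.sum_le_sum
          intro a _
          by_cases hc : G' w a = 1
          · rw [if_pos hc, if_pos hc]; exact hperm_bound w
          · rw [if_neg hc, if_neg hc]
      _ = ∑ w : Fin n, ((univ.filter fun a => G' w a = 1).card : ℝ) * ((n:ℝ) * Bk) := by
          apply Finset.sum_congr rfl
          intro w _
          rw [← Finset.sum_filter, Finset.sum_const, nsmul_eq_mul]
      _ ≤ ∑ _w : Fin n, (k:ℝ) * ((n:ℝ) * Bk) := by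
          apply Finset.sum_le_sum
          intro w _
          apply mul_le_mul_of_nonneg_right _ (by positivity)
          exact_mod_cast hedges_card w
      _ = (n:ℝ) * ((k:ℝ) * ((n:ℝ) * Bk)) := by
          rw [Finset.sum_const, Finset.card_univ, Fintype.card_fin, nsmul_eq_mul]
  have hBkeq : Bk = ((k+1).factorial : ℝ) ^ (((n:ℝ)-1)/((k:ℝ)+1)) := by
    rw [hBk, ← Real.rpow_natCast ((((k+1).factorial : ℝ)) ^ (((k:ℝ)+1))⁻¹) (n-1),
      ← Real.rpow_mul (by positivity)]
    congr 1
    rw [Nat.cast_sub hn]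
    push_cast
    rw [div_eq_mul_inv]
    ring
  calc (pathCycleCount G' : ℝ) ≤ (Supp.card : ℝ) := by exact_mod_cast stepA
    _ ≤ (E.card : ℝ) := by exact_mod_cast stepB
    _ ≤ (n:ℝ) * ((k:ℝ) * ((n:ℝ) * Bk)) := stepC
    _ = (n : ℝ) ^ 2 * (k : ℝ) * (Nat.factorial (k + 1) : ℝ) ^ (((n : ℝ) - 1) / ((k : ℝ) + 1)) := by
        rw [hBkeq]
        ring

end PCaux3


theorem stmt_10 (n k : ℕ) (hn : 1 ≤ n) (hk : 2 ≤ k) (G : Fin n → Fin n → ℕ)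
    (hdeg : ∀ v : Fin n, (∑ u, G v u) = k) :
    (pathCycleCount (fun u v : Fin n => min (G u v) 1) : ℝ) ≤
      (n : ℝ) ^ 2 * (k : ℝ) *
        (Nat.factorial (k + 1) : ℝ) ^ (((n : ℝ) - 1) / ((k : ℝ) + 1)) := by
  exact PCaux3.main n k hn hk G hdeg
end

section
/- Let M be a DMDP and let π_1 ≺ π_2 ≺ … ≺ π_ℓ be a strictly increasing sequence of policies for M. Then for each 1 < i ≤ ℓ there exists a state s such that the path-cycle P^{π_i}_s is not equal to P^{π_j}_{s'} for any 1 ≤ j < i and any state s'. Consequently, every increasing sequence of policies admits an associated sequence of pairwise distinct path-cycles, one from the representation of each policy. -/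
open scoped Classical
open Finset

section Aux

variable {S A : Type*} [Fintype S] [Fintype A]

lemma pcLen_mem (M : DMDP S A) (π : S → A) (s : S) :
    ∃ t' < M.pcLen π s, M.traj π s t' = M.traj π s (M.pcLen π s) := by
  have hne : {t : ℕ | ∃ t' < t, M.traj π s t' = M.traj π s t}.Nonempty := by
    obtain ⟨a, b, hab, h⟩ := Finite.exists_ne_map_eq_of_infinite (M.traj π s)
    rcases hab.lt_or_gt with h1 | h1
    · exact ⟨b, a, h1, h⟩
    · exact ⟨a, b, h1, h.symm⟩
  exact Nat.sInf_mem hne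

lemma pcLen_pos (M : DMDP S A) (π : S → A) (s : S) : 0 < M.pcLen π s := by
  rcases Nat.eq_zero_or_pos (M.pcLen π s) with h | h
  swap
  · exact h
  · obtain ⟨t', ht', _⟩ := pcLen_mem M π s
    rw [h] at ht'; exact absurd ht' (Nat.not_lt_zero _)

lemma traj_add (M : DMDP S A) (π : S → A) (s : S) (a b : ℕ) :
    M.traj π s (a + b) = M.traj π (M.traj π s b) a :=
  Function.iterate_add_apply _ a b s

lemma V_eq_of_pathCycle_eq (M : DMDP S A) (π π' : S → A) (s s' : S)
    (h : M.pathCycle π s = M.pathCycle π' s') :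
    s = s' ∧ M.V π s = M.V π' s' := by
  set L := M.pcLen π s with hLdef
  have hlen : L = M.pcLen π' s' := by
    have := congrArg List.length h
    simpa [DMDP.pathCycle] using this
  have htrip : ∀ t < L,
      M.traj π s t = M.traj π' s' t ∧
      π (M.traj π s t) = π' (M.traj π' s' t) ∧
      M.traj π s (t + 1) = M.traj π' s' (t + 1) := by
    intro t ht
    have ht' : t < L := ht
    have h1 : ((List.range L).map
          (fun t => (M.traj π s t, π (M.traj π s t), M.traj π s (t + 1))))[t]'(by simpa) =
        ((List.range (M.pcLen π' s')).map
          (fun t => (M.traj π' s' t, π' (M.traj π' s' t), M.traj π' s' (t + 1))))[t]'(by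
            simp [← hlen, ht]) := by
      have : M.pathCycle π s = M.pathCycle π' s' := h
      simp only [DMDP.pathCycle] at this
      exact List.getElem_of_eq this _
    simp only [List.getElem_map, List.getElem_range, Prod.mk.injEq] at h1
    exact ⟨h1.1, h1.2.1, h1.2.2⟩
  have hL1 : 0 < L := pcLen_pos M π s
  -- traj agree up to L
  have hle : ∀ t ≤ L, M.traj π s t = M.traj π' s' t := by
    intro t ht
    rcases lt_or_eq_of_le ht with ht | ht
    · exact (htrip t ht).1
    · have h1 : L - 1 < L := by omega
      have h3 := (htrip (L - 1) h1).2.2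
      have h2 : L - 1 + 1 = L := by omega
      rw [ht]; rwa [h2] at h3
  obtain ⟨t₀, ht₀', hloop0⟩ := pcLen_mem M π s
  have ht₀ : t₀ < L := ht₀'
  have hloop : M.traj π s t₀ = M.traj π s L := hloop0
  have hloop' : M.traj π' s' t₀ = M.traj π' s' L := by
    rw [← hle t₀ (le_of_lt ht₀), ← hle L le_rfl]; exact hloop
  -- reduction
  have reduce : ∀ t, ∃ u < L,
      M.traj π s u = M.traj π s t ∧ M.traj π' s' u = M.traj π' s' t := by
    intro t
    induction t using Nat.strong_induction_on with
    | _ t ih =>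
      rcases lt_or_ge t L with ht | ht
      · exact ⟨t, ht, rfl, rfl⟩
      · have hmt : t = (t - L) + L := by omega
        have e1 : M.traj π s t = M.traj π s ((t - L) + t₀) := by
          conv_lhs => rw [hmt, traj_add]
          rw [traj_add, hloop]
        have e1' : M.traj π' s' t = M.traj π' s' ((t - L) + t₀) := by
          conv_lhs => rw [hmt, traj_add]
          rw [traj_add, hloop']
        have hlt : (t - L) + t₀ < t := by omega
        obtain ⟨u, hu, hu1, hu2⟩ := ih _ hlt
        exact ⟨u, hu, hu1.trans e1.symm, hu2.trans e1'.symm⟩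
  have teq : ∀ t, M.traj π s t = M.traj π' s' t := by
    intro t
    obtain ⟨u, hu, hu1, hu2⟩ := reduce t
    rw [← hu1, ← hu2]; exact (htrip u hu).1
  have aeq : ∀ t, π (M.traj π s t) = π' (M.traj π' s' t) := by
    intro t
    obtain ⟨u, hu, hu1, hu2⟩ := reduce t
    rw [← hu1, ← hu2]; exact (htrip u hu).2.1
  have hs : s = s' := by
    have := teq 0
    simpa [DMDP.traj] using this
  refine ⟨hs, ?_⟩
  unfold DMDP.V
  exact tsum_congr fun t => by rw [aeq t, teq t]

lemma V_mono (M : DMDP S A) (ℓ : ℕ) (π : ℕ → S → A)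
    (hchain : ∀ i, i + 1 < ℓ → M.PLt (π i) (π (i + 1)))
    (a b : ℕ) (hab : a ≤ b) (hb : b < ℓ) (s : S) : M.V (π a) s ≤ M.V (π b) s := by
  induction b with
  | zero => simp_all
  | succ n ih =>
    rcases Nat.lt_or_ge a (n + 1) with h | h
    · have h1 : a ≤ n := by omega
      have h2 : n < ℓ := by omega
      exact (ih h1 h2).trans ((hchain n hb).1 s)
    · have : a = n + 1 := by omega
      subst this; exact le_rfl

end Aux

theorem stmt_11 {S A : Type*} [Fintype S] [Nonempty S] [Fintype A] [Nonempty A]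
    (M : DMDP S A) (ℓ : ℕ) (π : ℕ → S → A)
    (hchain : ∀ i, i + 1 < ℓ → M.PLt (π i) (π (i + 1))) :
    (∀ i, 0 < i → i < ℓ → ∃ s : S, ∀ j < i, ∀ s' : S,
        M.pathCycle (π i) s ≠ M.pathCycle (π j) s') ∧
    ∃ σ : ℕ → S, ∀ i < ℓ, ∀ j < ℓ, i ≠ j →
        M.pathCycle (π i) (σ i) ≠ M.pathCycle (π j) (σ j) := by
  have part1 : ∀ i, 0 < i → i < ℓ → ∃ s : S, ∀ j < i, ∀ s' : S,
      M.pathCycle (π i) s ≠ M.pathCycle (π j) s' := by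
    intro i hi0 hiℓ
    by_contra hcon
    push_neg at hcon
    have hstep := hchain (i - 1) (by omega)
    have hieq : i - 1 + 1 = i := by omega
    rw [hieq] at hstep
    obtain ⟨s, hs⟩ := hstep.2
    obtain ⟨j, hj, s', heq⟩ := hcon s
    obtain ⟨hss', hVeq⟩ := V_eq_of_pathCycle_eq M (π i) (π j) s s' heq
    have h1 : M.V (π j) s' ≤ M.V (π (i - 1)) s' := V_mono M ℓ π hchain j (i - 1) (by omega) (by omega) s'
    rw [hss'] at hVeq hs
    have : M.V (π i) s' ≤ M.V (π (i-1)) s' := hVeq.le.trans h1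
    exact absurd hs (not_lt.mpr this)
  refine ⟨part1, ?_⟩
  refine ⟨fun i => if h : 0 < i ∧ i < ℓ then (part1 i h.1 h.2).choose
    else Classical.arbitrary S, ?_⟩
  intro i hi j hj hij
  rcases hij.lt_or_gt with h | h
  · have hj0 : 0 < j ∧ j < ℓ := ⟨by omega, hj⟩
    simp only [dif_pos hj0]
    exact fun hc => (part1 j hj0.1 hj0.2).choose_spec i h _ hc.symm
  · have hi0 : 0 < i ∧ i < ℓ := ⟨by omega, hi⟩
    simp only [dif_pos hi0]
    exact (part1 i hi0.1 hi0.2).choose_spec j h _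
end

section
/- Let M = (S, A, T, R, γ) be an n-state, k-action DMDP, let π_1 ≺ π_2 ≺ … ≺ π_ℓ be a sequence of policies in which each π_{i+1} is obtained from π_i by policy improvement with arbitrary action selection, and let P = (P^{π_1}_{s_1}, …, P^{π_ℓ}_{s_ℓ}) be an associated sequence of pairwise distinct path-cycles. Then every equivalence class of the terms of P under the relation ∼ has size at most k·n. -/
open scoped Classical
open Finset

section Aux

variable {S A : Type*} [Fintype S] [Fintype A]

lemma aux_bellman (M : DMDP S A) (π : S → A) (s : S) :
    M.V π s = M.R s (π s) + M.gamma * M.V π (M.T s (π s)) := by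
  classical
  obtain ⟨C, hC⟩ : ∃ C, ∀ s a, |M.R s a| ≤ C := by
    refine ⟨∑ s, ∑ a, |M.R s a|, fun s a => ?_⟩
    calc |M.R s a| ≤ ∑ a, |M.R s a| :=
          Finset.single_le_sum (f := fun a => |M.R s a|)
            (fun _ _ => abs_nonneg _) (Finset.mem_univ a)
      _ ≤ ∑ s, ∑ a, |M.R s a| :=
          Finset.single_le_sum (f := fun s => ∑ a, |M.R s a|)
            (fun _ _ => Finset.sum_nonneg fun _ _ => abs_nonneg _) (Finset.mem_univ s)
  have hsum : ∀ s', Summable fun t : ℕ =>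
      M.gamma ^ t * M.R (M.traj π s' t) (π (M.traj π s' t)) := by
    intro s'
    apply Summable.of_norm_bounded (g := fun t => C * M.gamma ^ t)
      ((summable_geometric_of_lt_one M.gamma_nonneg M.gamma_lt_one).mul_left C)
    intro t
    rw [norm_mul, norm_pow, Real.norm_eq_abs, Real.norm_eq_abs,
      abs_of_nonneg M.gamma_nonneg, mul_comm]
    exact mul_le_mul_of_nonneg_right (hC _ _) (pow_nonneg M.gamma_nonneg t)
  have htraj : ∀ t, M.traj π s (t + 1) = M.traj π (M.T s (π s)) t := fun t => by
    simp [DMDP.traj, Function.iterate_succ_apply]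
  have h0 : M.traj π s 0 = s := rfl
  rw [DMDP.V, Summable.tsum_eq_zero_add (hsum s)]
  simp only [htraj, pow_zero, one_mul, h0, pow_succ', mul_assoc]
  rw [tsum_mul_left, DMDP.V]

lemma aux_stepR (M : DMDP S A) {π π' : S → A} (h : M.ImpStep π π')
    {s s₀ : S} (hnb : ∀ a, M.T s a = s₀) (hne : π' s ≠ π s) :
    M.R s (π s) < M.R s (π' s) := by
  have h1 := h.2 s hne
  rw [DMDP.Q, hnb (π' s)] at h1
  rw [aux_bellman M π s, hnb (π s)] at h1
  linarith

lemma aux_Rmono (M : DMDP S A) (ℓ : ℕ) (π : ℕ → S → A)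
    (hstep : ∀ i, i + 1 < ℓ → M.ImpStep (π i) (π (i + 1)))
    {s s₀ : S} (hnb : ∀ a, M.T s a = s₀) :
    ∀ i j, i ≤ j → j < ℓ →
      M.R s (π i s) ≤ M.R s (π j s) ∧
      (π i s ≠ π j s → M.R s (π i s) < M.R s (π j s)) := by
  intro i j hij hj
  induction j, hij using Nat.le_induction with
  | base => exact ⟨le_refl _, fun h => absurd rfl h⟩
  | succ j hij ih =>
    obtain ⟨h1, h2⟩ := ih (by omega)
    by_cases hc : π (j + 1) s = π j s
    · rw [hc]
      exact ⟨h1, h2⟩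
    · have hlt := aux_stepR M (hstep j (by omega)) hnb hc
      exact ⟨h1.trans hlt.le, fun _ => lt_of_le_of_lt h1 hlt⟩

lemma aux_pcLen_facts (M : DMDP S A) (π : S → A) (s : S) :
    1 ≤ M.pcLen π s ∧ M.pcLen π s ≤ Fintype.card S ∧
      ∀ t' t, t' < t → t < M.pcLen π s → M.traj π s t' ≠ M.traj π s t := by
  classical
  set Rec : Set ℕ := {t : ℕ | ∃ t' < t, M.traj π s t' = M.traj π s t} with hRec
  obtain ⟨x, y, hxy, hfxy⟩ := Fintype.exists_ne_map_eq_of_card_lt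
    (fun t : Fin (Fintype.card S + 1) => M.traj π s t.val) (by simp)
  have hwit : ∃ t ∈ Rec, t ≤ Fintype.card S := by
    rcases lt_or_gt_of_ne hxy with h | h
    · exact ⟨y.val, ⟨x.val, h, hfxy⟩, Nat.lt_succ_iff.mp y.isLt⟩
    · exact ⟨x.val, ⟨y.val, h, hfxy.symm⟩, Nat.lt_succ_iff.mp x.isLt⟩
  obtain ⟨t, htR, htn⟩ := hwit
  have hle : M.pcLen π s ≤ Fintype.card S := le_trans (Nat.sInf_le htR) htn
  have hmem : M.pcLen π s ∈ Rec := Nat.sInf_mem ⟨t, htR⟩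
  have h1 : 1 ≤ M.pcLen π s := by
    rcases Nat.eq_zero_or_pos (M.pcLen π s) with h | h
    · exfalso; rw [h] at hmem; obtain ⟨t', ht', _⟩ := hmem; omega
    · exact h
  refine ⟨h1, hle, fun t' t h1' h2' heq => ?_⟩
  have : M.pcLen π s ≤ t := Nat.sInf_le ⟨t', h1', heq⟩
  omega

end Aux

theorem stmt_12 {S A : Type*} [Fintype S] [Nonempty S] [Fintype A] [Nonempty A]
    (M : DMDP S A) (n k : ℕ) (hn : Fintype.card S = n) (hk : Fintype.card A = k)
    (ℓ : ℕ) (π : ℕ → S → A) (σ : ℕ → S)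
    (hchain : ∀ i, i + 1 < ℓ → M.PLt (π i) (π (i + 1)))
    (hstep : ∀ i, i + 1 < ℓ → M.ImpStep (π i) (π (i + 1)))
    (hassoc : ∀ i < ℓ, ∀ j < i, ∀ s' : S,
        M.pathCycle (π i) (σ i) ≠ M.pathCycle (π j) s') :
    ∀ i₀ < ℓ, ((Finset.range ℓ).filter fun i =>
        M.PCSim (M.pathCycle (π i) (σ i)) (M.pathCycle (π i₀) (σ i₀))).card ≤ k * n := by
  classical
  intro i₀ hi₀
  subst hn hk
  have hget : ∀ (π' : S → A) (s : S) (t : ℕ) (h : t < (M.pathCycle π' s).length),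
      (M.pathCycle π' s).get ⟨t, h⟩ =
        (M.traj π' s t, π' (M.traj π' s t), M.traj π' s (t + 1)) := by
    intro π' s t h
    simp [DMDP.pathCycle]
  have hlen : ∀ (π' : S → A) (s : S), (M.pathCycle π' s).length = M.pcLen π' s := by
    intro π' s; simp [DMDP.pathCycle]
  set n := Fintype.card S with hn
  set k := Fintype.card A with hk
  set st : ℕ → S := M.traj (π i₀) (σ i₀) with hst
  set L : ℕ := M.pcLen (π i₀) (σ i₀) with hLdef
  obtain ⟨hL1, hLn, -⟩ := aux_pcLen_facts M (π i₀) (σ i₀)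
  set cls := (Finset.range ℓ).filter (fun i =>
    M.PCSim (M.pathCycle (π i) (σ i)) (M.pathCycle (π i₀) (σ i₀))) with hcls
  -- basic consequences of PCSim membership
  have hmem : ∀ i, M.PCSim (M.pathCycle (π i) (σ i)) (M.pathCycle (π i₀) (σ i₀)) →
      M.pcLen (π i) (σ i) = L ∧
      (∀ t < L, M.traj (π i) (σ i) t = st t ∧ M.traj (π i) (σ i) (t + 1) = st (t + 1)) ∧
      (∀ t < L, π i (st t) ≠ π i₀ (st t) → M.NonBranching (st t)) := by
    intro i hsim
    have hlenL : M.pcLen (π i) (σ i) = L := by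
      have := hsim.1
      rwa [hlen, hlen] at this
    refine ⟨hlenL, ?_, ?_⟩
    · intro t ht
      have h₁ : t < (M.pathCycle (π i) (σ i)).length := by rw [hlen, hlenL]; exact ht
      have h₂ : t < (M.pathCycle (π i₀) (σ i₀)).length := by rw [hlen]; exact ht
      obtain ⟨e1, e2, -⟩ := hsim.2 t h₁ h₂
      rw [hget, hget] at e1 e2
      exact ⟨e1, e2⟩
    · intro t ht hact
      have h₁ : t < (M.pathCycle (π i) (σ i)).length := by rw [hlen, hlenL]; exact ht
      have h₂ : t < (M.pathCycle (π i₀) (σ i₀)).length := by rw [hlen]; exact ht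
      obtain ⟨e1, -, e3⟩ := hsim.2 t h₁ h₂
      rw [hget, hget] at e1 e3
      simp only at e1 e3
      rw [e1] at e3
      exact e3 hact
  -- the potential function
  set g : ℕ → ℕ := fun i => ∑ t ∈ Finset.range L,
    (Finset.univ.filter fun a : A => M.R (st t) a < M.R (st t) (π i (st t))).card with hg
  have hgbound : ∀ i, g i ≤ n * (k - 1) := by
    intro i
    have hterm : ∀ t ∈ Finset.range L,
        (Finset.univ.filter fun a : A => M.R (st t) a < M.R (st t) (π i (st t))).card ≤ k - 1 := by
      intro t _
      have hsub : (Finset.univ.filter fun a : A => M.R (st t) a < M.R (st t) (π i (st t))) ⊆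
          Finset.univ.erase (π i (st t)) := by
        intro a ha
        rw [Finset.mem_filter] at ha
        exact Finset.mem_erase.mpr ⟨fun he => absurd (he ▸ ha.2) (lt_irrefl _), Finset.mem_univ a⟩
      calc _ ≤ (Finset.univ.erase (π i (st t))).card := Finset.card_le_card hsub
        _ = k - 1 := by rw [Finset.card_erase_of_mem (Finset.mem_univ _), Finset.card_univ]
    calc g i ≤ ∑ _t ∈ Finset.range L, (k - 1) := Finset.sum_le_sum hterm
      _ = L * (k - 1) := by rw [Finset.sum_const, Finset.card_range, smul_eq_mul]
      _ ≤ n * (k - 1) := Nat.mul_le_mul_right _ hLn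
  -- strict monotonicity of g on the class
  have hmono : ∀ i ∈ cls, ∀ j ∈ cls, i < j → g i < g j := by
    intro i hi j hj hij
    rw [hcls, Finset.mem_filter, Finset.mem_range] at hi hj
    obtain ⟨hiℓ, hsimi⟩ := hi
    obtain ⟨hjℓ, hsimj⟩ := hj
    obtain ⟨hLi, hTi, hNBi⟩ := hmem i hsimi
    obtain ⟨hLj, hTj, hNBj⟩ := hmem j hsimj
    have hnbOf : ∀ t, t < L → π i (st t) ≠ π j (st t) → M.NonBranching (st t) := by
      intro t ht hne
      by_cases hci : π i (st t) = π i₀ (st t)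
      · exact hNBj t ht (fun hcj => hne (hci.trans hcj.symm))
      · exact hNBi t ht hci
    have hne : ∃ t₀ < L, π i (st t₀) ≠ π j (st t₀) := by
      by_contra hcon
      push_neg at hcon
      apply hassoc j hjℓ i hij (σ i)
      apply List.ext_get
      · rw [hlen, hlen, hLi, hLj]
      · intro t h₁ h₂
        have ht : t < L := by rw [hlen, hLj] at h₁; exact h₁
        rw [hget, hget, (hTi t ht).1, (hTi t ht).2, (hTj t ht).1, (hTj t ht).2,
          hcon t ht]
    have hle : ∀ t ∈ Finset.range L,
        (Finset.univ.filter fun a : A => M.R (st t) a < M.R (st t) (π i (st t))).card ≤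
        (Finset.univ.filter fun a : A => M.R (st t) a < M.R (st t) (π j (st t))).card := by
      intro t htm
      have ht := Finset.mem_range.mp htm
      by_cases hc : π i (st t) = π j (st t)
      · rw [hc]
      · obtain ⟨s₀, hs₀⟩ := hnbOf t ht hc
        have hR := (aux_Rmono M ℓ π hstep hs₀ i j hij.le hjℓ).1
        apply Finset.card_le_card
        intro a ha
        rw [Finset.mem_filter] at ha ⊢
        exact ⟨ha.1, lt_of_lt_of_le ha.2 hR⟩
    obtain ⟨t₀, ht₀, hneq⟩ := hne
    apply Finset.sum_lt_sum hle
    refine ⟨t₀, Finset.mem_range.mpr ht₀, ?_⟩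
    obtain ⟨s₀, hs₀⟩ := hnbOf t₀ ht₀ hneq
    have hR := (aux_Rmono M ℓ π hstep hs₀ i j hij.le hjℓ).2 hneq
    apply Finset.card_lt_card
    rw [Finset.ssubset_iff_of_subset]
    · refine ⟨π i (st t₀), ?_, ?_⟩
      · rw [Finset.mem_filter]; exact ⟨Finset.mem_univ _, hR⟩
      · rw [Finset.mem_filter]; exact fun h => absurd h.2 (lt_irrefl _)
    · intro a ha
      rw [Finset.mem_filter] at ha ⊢
      exact ⟨ha.1, lt_trans ha.2 hR⟩
  -- conclude via injectivity of g on the class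
  have hinj : Set.InjOn g cls := by
    intro a ha b hb hab
    by_contra hneq
    rcases lt_or_gt_of_ne hneq with h | h
    · exact absurd hab (hmono a ha b hb h).ne
    · exact absurd hab.symm (hmono b hb a ha h).ne
  have hcard : cls.card ≤ (Finset.range (n * (k - 1) + 1)).card :=
    Finset.card_le_card_of_injOn g
      (fun i _ => Finset.mem_range.mpr (Nat.lt_succ_of_le (hgbound i))) hinj
  rw [Finset.card_range] at hcard
  have hk1 : 1 ≤ k := Fintype.card_pos
  have hn1 : 1 ≤ n := Fintype.card_pos
  calc cls.card ≤ n * (k - 1) + 1 := hcard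
    _ ≤ n * (k - 1) + n := by omega
    _ = n * k := by
      obtain ⟨m, hm⟩ : ∃ m, k = m + 1 := ⟨k - 1, by omega⟩
      rw [hm]
      simp [Nat.mul_succ]
    _ = k * n := Nat.mul_comm n k
end
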